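/- In any model H of HST, H and the condensed subuniverse V contain the same ordinals: an element of V is an ordinal in the sense of V iff it is an ordinal in the sense of H, and every ordinal of H belongs to V. -/

import Mathlib

/-!
Semantic framework for models of Hrbaček set theory (HST) in the ∈-st-language,
following Kanovei–Reeken, "Isomorphism property in nonstandard extensions of the
ZFC universe".

A model is a type `M` together with a membership relation `mem : M → M → Prop`
and a standardness predicate `stP : M → Prop`.  Formulas of the ∈-st-language
are deeply embedded (`StFormula`), so that axiom schemata can be stated.
All set-theoretic notions (pairs, functions, ordinals, ...) are expressed
relative to a class `C : M → Prop`, which also yields relativizations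
(to the standard universe, the internal universe, inner classes, etc.).
-/

universe u v

namespace HSTF

variable {M : Type u}

def TrueC {M : Type u} : M → Prop := fun _ => True
def FalseC {M : Type u} : M → Prop := fun _ => False

/-! ### Formulas of the ∈-st-language -/

inductive StFormula : ℕ → Type where
  | mem {n} (i j : Fin n) : StFormula n
  | eq {n} (i j : Fin n) : StFormula n
  | st {n} (i : Fin n) : StFormula n
  | not {n} (φ : StFormula n) : StFormula n
  | and {n} (φ ψ : StFormula n) : StFormula n
  | all {n} (φ : StFormula (n + 1)) : StFormula n

/-- ∈-formulas: formulas in which the standardness predicate does not occur. -/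
def StFormula.IsEpsilon : ∀ {n}, StFormula n → Prop
  | _, .mem _ _ => True
  | _, .eq _ _ => True
  | _, .st _ => False
  | _, .not φ => φ.IsEpsilon
  | _, .and φ ψ => φ.IsEpsilon ∧ ψ.IsEpsilon
  | _, .all φ => φ.IsEpsilon

/-- Evaluation of a formula in `(M, mem, stP)`, with all quantifiers
relativized to the class `C`. -/
def EvalIn (mem : M → M → Prop) (stP : M → Prop) (C : M → Prop) :
    ∀ {n}, StFormula n → (Fin n → M) → Prop
  | _, .mem i j, val => mem (val i) (val j)
  | _, .eq i j, val => val i = val j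
  | _, .st i, val => stP (val i)
  | _, .not φ, val => ¬ EvalIn mem stP C φ val
  | _, .and φ ψ, val => EvalIn mem stP C φ val ∧ EvalIn mem stP C ψ val
  | _, .all φ, val => ∀ x, C x → EvalIn mem stP C φ (Fin.snoc val x)

/-! ### Set-theoretic coding, relative to a class `C` -/

section Coding
variable (mem : M → M → Prop) (C : M → Prop)

def EmptyIn (e : M) : Prop := ∀ z, C z → ¬ mem z e

def SingIn (s x : M) : Prop := ∀ z, C z → (mem z s ↔ z = x)

def UPairIn (p x y : M) : Prop := ∀ z, C z → (mem z p ↔ (z = x ∨ z = y))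

/-- `p` is the Kuratowski ordered pair `⟨x, y⟩`, relative to `C`. -/
def OPairIn (p x y : M) : Prop :=
  ∃ s t, C s ∧ C t ∧ SingIn mem C s x ∧ UPairIn mem C t x y ∧ UPairIn mem C p s t

/-- `f(x) = y` for a set-coded function `f` (a set of ordered pairs). -/
def FValIn (f x y : M) : Prop := ∃ p, C p ∧ mem p f ∧ OPairIn mem C p x y

/-- `f` is a (set-coded) function with domain exactly the class `D`. -/
def FuncOnIn (f : M) (D : M → Prop) : Prop :=
  (∀ p, C p → mem p f → ∃ x y, C x ∧ C y ∧ D x ∧ OPairIn mem C p x y) ∧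
  (∀ x, C x → D x → ∃ y, C y ∧ FValIn mem C f x y) ∧
  (∀ x y y', C x → C y → C y' → FValIn mem C f x y → FValIn mem C f x y' → y = y')

def SubIn (x y : M) : Prop := ∀ z, C z → mem z x → mem z y

def TransIn (x : M) : Prop := ∀ y, C y → mem y x → ∀ z, C z → mem z y → mem z x

/-- `s = x ∪ {x}`. -/
def SuccIn (s x : M) : Prop := ∀ z, C z → (mem z s ↔ (mem z x ∨ z = x))

/-- `∈` restricted to `x` is well-founded (in the sense of the model):
every nonempty subset (of the model, in `C`) of `x` has an `∈`-minimal element. -/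
def WFIn (x : M) : Prop :=
  ∀ Y, C Y → SubIn mem C Y x → (∃ w, C w ∧ mem w Y) →
    ∃ w, C w ∧ mem w Y ∧ ∀ u, C u → mem u w → ¬ mem u Y

/-- `x` is an ordinal: a transitive set well-ordered by `∈` (relative to `C`). -/
def OrdIn (x : M) : Prop :=
  TransIn mem C x ∧
  (∀ y z, C y → C z → mem y x → mem z x → (mem y z ∨ y = z ∨ mem z y)) ∧
  (∀ y z w, C y → C z → C w → mem y x → mem z x → mem w x → mem y z → mem z w → mem y w) ∧
  (∀ y, C y → mem y x → ¬ mem y y) ∧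
  WFIn mem C x

/-- `x` is a natural number: an ordinal such that every ordinal `≤ x`
is zero or a successor. -/
def NatIn (x : M) : Prop :=
  OrdIn mem C x ∧ ∀ y, C y → (y = x ∨ mem y x) →
    (EmptyIn mem C y ∨ ∃ z, C z ∧ SuccIn mem C y z)

/-- `x` and `y` are equinumerous via a (set-coded) bijection, relative to `C`. -/
def EquinumIn (x y : M) : Prop :=
  ∃ f, C f ∧ FuncOnIn mem C f (fun z => mem z x) ∧
    (∀ a b w, C a → C b → C w → FValIn mem C f a w → FValIn mem C f b w → a = b) ∧
    (∀ w, C w → (mem w y ↔ ∃ a, C a ∧ mem a x ∧ FValIn mem C f a w))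

def FiniteIn (x : M) : Prop := ∃ n, C n ∧ NatIn mem C n ∧ EquinumIn mem C x n

/-- `x` is a cardinal: an ordinal not equinumerous to any smaller ordinal. -/
def CardinalIn (x : M) : Prop :=
  OrdIn mem C x ∧ ∀ y, C y → mem y x → ¬ EquinumIn mem C x y

/-- The set `r` (of ordered pairs) well-orders the set `x`, relative to `C`. -/
def WOrdersIn (r x : M) : Prop :=
  (∀ a b, C a → C b → mem a x → mem b x → a ≠ b →
    ((∃ p, C p ∧ mem p r ∧ OPairIn mem C p a b) ∨ (∃ p, C p ∧ mem p r ∧ OPairIn mem C p b a))) ∧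
  (∀ a, C a → mem a x → ¬ ∃ p, C p ∧ mem p r ∧ OPairIn mem C p a a) ∧
  (∀ a b c, C a → C b → C c →
    (∃ p, C p ∧ mem p r ∧ OPairIn mem C p a b) → (∃ p, C p ∧ mem p r ∧ OPairIn mem C p b c) →
    (∃ p, C p ∧ mem p r ∧ OPairIn mem C p a c)) ∧
  (∀ Y, C Y → SubIn mem C Y x → (∃ w, C w ∧ mem w Y) →
    ∃ a, C a ∧ mem a Y ∧ ∀ b, C b → mem b Y → b ≠ a → ∃ p, C p ∧ mem p r ∧ OPairIn mem C p a b)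

def WOableIn (x : M) : Prop := ∃ r, C r ∧ WOrdersIn mem C r x

end Coding

/-! ### ZFC, relativized to a class -/

/-- The class `C` of `(M, mem)` is a model of ZFC (with the Separation and
Collection schemata for ∈-formulas, and Choice in the form of the
well-ordering principle). -/
structure ZFCModelIn (mem : M → M → Prop) (C : M → Prop) : Prop where
  nonemp : ∃ x, C x
  ext : ∀ x y, C x → C y → (∀ z, C z → (mem z x ↔ mem z y)) → x = y
  pair : ∀ x y, C x → C y → ∃ p, C p ∧ UPairIn mem C p x y
  union : ∀ x, C x → ∃ u, C u ∧ ∀ z, C z → (mem z u ↔ ∃ y, C y ∧ mem y x ∧ mem z y)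
  power : ∀ x, C x → ∃ pw, C pw ∧ ∀ z, C z → (mem z pw ↔ SubIn mem C z x)
  infinity : ∃ w, C w ∧ (∃ e, C e ∧ mem e w ∧ EmptyIn mem C e) ∧
    ∀ x, C x → mem x w → ∃ s, C s ∧ mem s w ∧ SuccIn mem C s x
  foundation : ∀ x, C x → (∃ y, C y ∧ mem y x) →
    ∃ y, C y ∧ mem y x ∧ ∀ z, C z → mem z y → ¬ mem z x
  separation : ∀ {n} (φ : StFormula (n + 1)), φ.IsEpsilon →
    ∀ val : Fin n → M, (∀ i, C (val i)) → ∀ x, C x →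
      ∃ s, C s ∧ ∀ z, C z → (mem z s ↔ mem z x ∧ EvalIn mem FalseC C φ (Fin.snoc val z))
  collection : ∀ {n} (φ : StFormula (n + 2)), φ.IsEpsilon →
    ∀ val : Fin n → M, (∀ i, C (val i)) → ∀ x, C x →
      ∃ B, C B ∧ ∀ a, C a → mem a x →
        (∃ b, C b ∧ EvalIn mem FalseC C φ (Fin.snoc (Fin.snoc val a) b)) →
        ∃ b, C b ∧ mem b B ∧ EvalIn mem FalseC C φ (Fin.snoc (Fin.snoc val a) b)
  choice_wo : ∀ x, C x → ∃ r, C r ∧ WOrdersIn mem C r x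

/-! ### HST -/

/-- `x` is internal: a member of some standard set. -/
def Internal (mem : M → M → Prop) (stP : M → Prop) (x : M) : Prop := ∃ y, stP y ∧ mem x y

/-- `x` is a set of standard size: the image of `σS = {z ∈ S : st z}`
(for some standard `S`) under some (set-coded) function. -/
def SSize (mem : M → M → Prop) (stP : M → Prop) (x : M) : Prop :=
  ∃ S f, stP S ∧ FuncOnIn mem TrueC f (fun z => stP z ∧ mem z S) ∧
    ∀ y, mem y x ↔ ∃ a, stP a ∧ mem a S ∧ FValIn mem TrueC f a y

/-- `(M, mem, stP)` is a model of Hrbaček set theory HST. -/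
structure HSTModel (mem : M → M → Prop) (stP : M → Prop) : Prop where
  /-- 1a: the standard universe models ZFC (the relativization `Φ^st` of every
  ZFC axiom `Φ`). -/
  zfc_st : ZFCModelIn mem stP
  /-- 1b: Transfer for ∈-formulas with standard parameters, between the
  standard and the internal universe. -/
  transfer : ∀ {n} (φ : StFormula (n + 1)), φ.IsEpsilon →
    ∀ val : Fin n → M, (∀ i, stP (val i)) →
      ((∃ x, Internal mem stP x ∧ EvalIn mem FalseC (Internal mem stP) φ (Fin.snoc val x)) ↔
       (∃ x, stP x ∧ EvalIn mem FalseC (Internal mem stP) φ (Fin.snoc val x)))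
  /-- 1c: elements of internal sets are internal. -/
  internal_trans : ∀ x y, Internal mem stP x → mem y x → Internal mem stP y
  /-- 2: Standardization. -/
  standardization : ∀ X, ∃ Y, stP Y ∧ ∀ z, stP z → (mem z Y ↔ mem z X)
  /-- 3: Extensionality. -/
  ext : ∀ x y, (∀ z, mem z x ↔ mem z y) → x = y
  /-- 3: Pairing. -/
  pairing : ∀ x y, ∃ p, UPairIn mem TrueC p x y
  /-- 3: Union. -/
  union : ∀ x, ∃ u, ∀ z, mem z u ↔ ∃ y, mem y x ∧ mem z y
  /-- 3: Infinity. -/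
  infinity : ∃ w, (∃ e, mem e w ∧ EmptyIn mem TrueC e) ∧
    ∀ x, mem x w → ∃ s, mem s w ∧ SuccIn mem TrueC s x
  /-- 3: Separation for all ∈-st-formulas. -/
  separation : ∀ {n} (φ : StFormula (n + 1)) (val : Fin n → M) (x : M),
    ∃ s, ∀ z, mem z s ↔ (mem z x ∧ EvalIn mem stP TrueC φ (Fin.snoc val z))
  /-- 3: Collection for all ∈-st-formulas. -/
  collection : ∀ {n} (φ : StFormula (n + 2)) (val : Fin n → M) (x : M),
    ∃ B, ∀ a, mem a x → (∃ b, EvalIn mem stP TrueC φ (Fin.snoc (Fin.snoc val a) b)) →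
      ∃ b, mem b B ∧ EvalIn mem stP TrueC φ (Fin.snoc (Fin.snoc val a) b)
  /-- 3: Replacement for all ∈-st-formulas. -/
  replacement : ∀ {n} (φ : StFormula (n + 2)) (val : Fin n → M) (x : M),
    (∀ a b b', EvalIn mem stP TrueC φ (Fin.snoc (Fin.snoc val a) b) →
      EvalIn mem stP TrueC φ (Fin.snoc (Fin.snoc val a) b') → b = b') →
    ∃ B, ∀ b, mem b B ↔ ∃ a, mem a x ∧ EvalIn mem stP TrueC φ (Fin.snoc (Fin.snoc val a) b)
  /-- 4: Weak Regularity. -/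
  weak_reg : ∀ X, (∃ x, mem x X) →
    ∃ x, mem x X ∧ ∀ y, mem y x → mem y X → Internal mem stP y
  /-- 5: Saturation for standard size families of internal sets. -/
  saturation : ∀ X, SSize mem stP X → (∀ Y, mem Y X → Internal mem stP Y) →
    (∀ X', (∃ Y, mem Y X') → SubIn mem TrueC X' X → FiniteIn mem TrueC X' →
      ∃ z, ∀ Y, mem Y X' → mem z Y) →
    ∃ z, ∀ Y, mem Y X → mem z Y
  /-- 6: Choice for families indexed by a set of standard size. -/
  ss_choice : ∀ X, SSize mem stP X → (∀ x, mem x X → ∃ y, mem y x) →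
    ∃ f, FuncOnIn mem TrueC f (fun x => mem x X) ∧
      ∀ x y, mem x X → FValIn mem TrueC f x y → mem y x
  /-- 6: Dependent Choice. -/
  dep_choice : ∀ X R x0, mem x0 X →
    (∀ x, mem x X → ∃ y, mem y X ∧ ∃ q, mem q R ∧ OPairIn mem TrueC q x y) →
    ∃ w f, (∀ z, mem z w ↔ NatIn mem TrueC z) ∧ FuncOnIn mem TrueC f (fun k => mem k w) ∧
      (∀ k y, mem k w → FValIn mem TrueC f k y → mem y X) ∧
      (∀ e, EmptyIn mem TrueC e → mem e w → FValIn mem TrueC f e x0) ∧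
      (∀ k s y y', mem k w → mem s w → SuccIn mem TrueC s k →
        FValIn mem TrueC f k y → FValIn mem TrueC f s y' →
        ∃ q, mem q R ∧ OPairIn mem TrueC q y y')

/-! ### BST -/

/-- The class `C` (with the standardness predicate `stP`) is a model of
bounded set theory BST. -/
structure BSTModelIn (mem : M → M → Prop) (stP : M → Prop) (C : M → Prop) : Prop where
  /-- ZFC in the ∈-language. -/
  zfc : ZFCModelIn mem C
  /-- standard sets belong to the universe. -/
  st_sub : ∀ x, stP x → C x
  /-- Bounded Idealization. -/
  bdd_idealization : ∀ {n} (φ : StFormula (n + 2)), φ.IsEpsilon →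
    ∀ val : Fin n → M, (∀ i, C (val i)) → ∀ X, stP X →
      ((∀ A, stP A → FiniteIn mem C A →
          ∃ x, C x ∧ mem x X ∧ ∀ a, C a → mem a A →
            EvalIn mem stP C φ (Fin.snoc (Fin.snoc val x) a)) ↔
       (∃ x, C x ∧ mem x X ∧ ∀ a, stP a →
          EvalIn mem stP C φ (Fin.snoc (Fin.snoc val x) a)))
  /-- Standardization for all ∈-st-formulas. -/
  standardization : ∀ {n} (φ : StFormula (n + 1)) (val : Fin n → M), (∀ i, C (val i)) →
    ∀ X, stP X → ∃ Y, stP Y ∧ ∀ x, stP x →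
      (mem x Y ↔ (mem x X ∧ EvalIn mem stP C φ (Fin.snoc val x)))
  /-- Transfer. -/
  transfer : ∀ {n} (φ : StFormula (n + 1)), φ.IsEpsilon →
    ∀ val : Fin n → M, (∀ i, stP (val i)) →
      (∃ x, C x ∧ EvalIn mem FalseC C φ (Fin.snoc val x)) →
      ∃ x, stP x ∧ EvalIn mem FalseC C φ (Fin.snoc val x)
  /-- Boundedness. -/
  boundedness : ∀ x, C x → ∃ X, stP X ∧ mem x X

/-! ### Condensation -/

/-- `h` is the condensation map: `h x = {h y : y ∈ x, y standard}` for standard `x`. -/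
def Condenses (mem : M → M → Prop) (stP : M → Prop) (h : M → M) : Prop :=
  ∀ x, stP x → ∀ z, mem z (h x) ↔ ∃ y, stP y ∧ mem y x ∧ z = h y

/-- The condensed subuniverse `V = {h x : x standard}`. -/
def CondV (stP : M → Prop) (h : M → M) (z : M) : Prop := ∃ x, stP x ∧ z = h x

/-! ### Internally presented structures and the isomorphism property -/

/-- `t` codes the tuple `l` (as an iterated Kuratowski pair). -/
def TupCode (mem : M → M → Prop) : List M → M → Prop
  | [], t => ∀ z, ¬ mem z t
  | x :: l, t => ∃ r, OPairIn mem TrueC t x r ∧ TupCode mem l r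

/-- `(A, R)` is an internally presented structure of the (relational) language
with symbols `ι` and arities `ar`: the base set `A` and each interpretation
`R s` (a set of `ar s`-tuples from `A`) is internal. -/
def IntPresented (mem : M → M → Prop) (stP : M → Prop) {ι : Type v} (ar : ι → ℕ)
    (A : M) (R : ι → M) : Prop :=
  Internal mem stP A ∧ ∀ s : ι, Internal mem stP (R s) ∧
    ∀ t, mem t (R s) → ∃ l : List M, l.length = ar s ∧ (∀ x ∈ l, mem x A) ∧ TupCode mem l t

/-- First-order formulas of a relational language. -/
inductive FOF (ι : Type v) (ar : ι → ℕ) : ℕ → Type v where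
  | rel {n} (s : ι) (ts : Fin (ar s) → Fin n) : FOF ι ar n
  | eq {n} (i j : Fin n) : FOF ι ar n
  | not {n} (φ : FOF ι ar n) : FOF ι ar n
  | and {n} (φ ψ : FOF ι ar n) : FOF ι ar n
  | all {n} (φ : FOF ι ar (n + 1)) : FOF ι ar n

/-- Satisfaction in an internally presented structure. -/
def FOSat (mem : M → M → Prop) {ι : Type v} {ar : ι → ℕ} (A : M) (R : ι → M) :
    ∀ {n}, FOF ι ar n → (Fin n → M) → Prop
  | _, .rel s ts, val => ∃ t, TupCode mem (List.ofFn fun k => val (ts k)) t ∧ mem t (R s)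
  | _, .eq i j, val => val i = val j
  | _, .not φ, val => ¬ FOSat mem A R φ val
  | _, .and φ ψ, val => FOSat mem A R φ val ∧ FOSat mem A R ψ val
  | _, .all φ, val => ∀ x, mem x A → FOSat mem A R φ (Fin.snoc val x)

/-- Elementary equivalence of the two structures. -/
def ElemEq (mem : M → M → Prop) {ι : Type v} (ar : ι → ℕ)
    (A : M) (RA : ι → M) (B : M) (RB : ι → M) : Prop :=
  ∀ φ : FOF ι ar 0, (FOSat mem A RA φ Fin.elim0 ↔ FOSat mem B RB φ Fin.elim0)

/-- The two structures are isomorphic (via an isomorphism which is a set of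
the model). -/
def IsoIn (mem : M → M → Prop) {ι : Type v}
    (A : M) (RA : ι → M) (B : M) (RB : ι → M) : Prop :=
  ∃ f : M, FuncOnIn mem TrueC f (fun x => mem x A) ∧
    (∀ x y, mem x A → FValIn mem TrueC f x y → mem y B) ∧
    (∀ x x' y, FValIn mem TrueC f x y → FValIn mem TrueC f x' y → x = x') ∧
    (∀ y, mem y B → ∃ x, mem x A ∧ FValIn mem TrueC f x y) ∧
    (∀ (s : ι) (l l' : List M), (∀ x ∈ l, mem x A) →
      List.Forall₂ (FValIn mem TrueC f) l l' →
      ∀ t t', TupCode mem l t → TupCode mem l' t' → (mem t (RA s) ↔ mem t' (RB s)))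

/-- The index type `ι` is of standard size: it is equinumerous (externally)
with `σS = {x ∈ S : st x}` for some standard `S`. -/
def SSizeIndex (mem : M → M → Prop) (stP : M → Prop) (ι : Type v) : Prop :=
  ∃ S : M, stP S ∧ ∃ e : ι → M, Function.Injective e ∧
    (∀ i, stP (e i) ∧ mem (e i) S) ∧ (∀ x, stP x → mem x S → ∃ i, e i = x)

/-- The isomorphism property IP: any two internally presented elementarily
equivalent structures of a language with (standard size)-many symbols are
isomorphic. -/
def IPProp (mem : M → M → Prop) (stP : M → Prop) : Prop :=
  ∀ (ι : Type u) (ar : ι → ℕ), SSizeIndex mem stP ι →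
    ∀ (A : M) (RA : ι → M) (B : M) (RB : ι → M),
      IntPresented mem stP ar A RA → IntPresented mem stP ar B RB →
      ElemEq mem ar A RA B RB → IsoIn mem A RA B RB

/-! ### Partially ordered sets inside the model; closure and distributivity -/

section PO
variable (mem : M → M → Prop)

/-- `p ≤ q` according to the set `R` of ordered pairs. -/
def LeVia (R p q : M) : Prop := ∃ z, mem z R ∧ OPairIn mem TrueC z p q

/-- `⟨P; R⟩` is a partially ordered set (coded in the model). -/
def IsPOOn (P R : M) : Prop :=
  (∀ z, mem z R → ∃ p q, mem p P ∧ mem q P ∧ OPairIn mem TrueC z p q) ∧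
  (∀ p, mem p P → LeVia mem R p p) ∧
  (∀ p q, LeVia mem R p q → LeVia mem R q p → p = q) ∧
  (∀ p q r, LeVia mem R p q → LeVia mem R q r → LeVia mem R p r)

/-- `⟨P; R⟩` is `κ`-closed: every decreasing `κ`-sequence (a set-coded function
on `κ`) has a lower bound. -/
def KClosed (κ P R : M) : Prop :=
  ∀ f, FuncOnIn mem TrueC f (fun α => mem α κ) →
    (∀ α y, mem α κ → FValIn mem TrueC f α y → mem y P) →
    (∀ α β u w, mem α β → mem β κ → FValIn mem TrueC f α u → FValIn mem TrueC f β w →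
      LeVia mem R w u) →
    ∃ p, mem p P ∧ ∀ α u, mem α κ → FValIn mem TrueC f α u → LeVia mem R p u

/-- `Y` is an open dense subset of `⟨P; R⟩`. -/
def OpenDenseIn (P R Y : M) : Prop :=
  (∀ y, mem y Y → mem y P) ∧
  (∀ p, mem p P → ∃ q, mem q Y ∧ LeVia mem R q p) ∧
  (∀ p q, mem p P → mem q Y → LeVia mem R p q → mem p Y)

/-- `⟨P; R⟩` is `κ`-distributive: the intersection of `κ`-many open dense
subsets is dense. -/
def KDistrib (κ P R : M) : Prop :=
  ∀ Df, FuncOnIn mem TrueC Df (fun α => mem α κ) →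
    (∀ α Y, mem α κ → FValIn mem TrueC Df α Y → OpenDenseIn mem P R Y) →
    ∀ p, mem p P → ∃ q, mem q P ∧ LeVia mem R q p ∧
      ∀ α Y, mem α κ → FValIn mem TrueC Df α Y → mem q Y

/-- For each cardinal `κ`, every `κ`-closed p.o. set is `κ`-distributive. -/
def KClosedDistrib : Prop :=
  ∀ κ, CardinalIn mem TrueC κ → ∀ P R, IsPOOn mem P R → KClosed mem κ P R → KDistrib mem κ P R

/-- `⟨P; R⟩` is standard size distributive: `κ`-distributive for every cardinal. -/
def SSDistribOn (P R : M) : Prop :=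
  ∀ κ, CardinalIn mem TrueC κ → KDistrib mem κ P R

end PO

/-! ### The class L[I] of sets constructible from internal sets -/

section LI
variable (mem : M → M → Prop) (stP : M → Prop)

/-- `n` is a natural number of the internal universe. -/
def INat (n : M) : Prop := Internal mem stP n ∧ NatIn mem (Internal mem stP) n

/-- `t` is an internal finite sequence: an internal function whose domain is a
natural number of the internal universe. -/
def IsISeq (t : M) : Prop :=
  Internal mem stP t ∧ ∃ n, INat mem stP n ∧ FuncOnIn mem TrueC t (fun i => mem i n)

/-- `T` is a tree: a nonempty set of internal finite sequences closed under
initial segments. -/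
def IsTreeSet (T : M) : Prop :=
  (∃ t, mem t T) ∧ (∀ t, mem t T → IsISeq mem stP t) ∧
  (∀ t, mem t T → ∀ t', IsISeq mem stP t' → SubIn mem TrueC t' t → mem t' T)

/-- `t` is a `⊆`-maximal element of `T`. -/
def MaxIn (T t : M) : Prop := mem t T ∧ ∀ s, mem s T → SubIn mem TrueC t s → s = t

/-- `T` is well-founded: every nonempty subset of `T` has a `⊆`-maximal element. -/
def WfTreeSet (T : M) : Prop :=
  ∀ T', (∃ t, mem t T') → SubIn mem TrueC T' T →
    ∃ t, mem t T' ∧ ∀ s, mem s T' → SubIn mem TrueC t s → s = t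

/-- `s = t ⌢ a`. -/
def IsConcat (s t a : M) : Prop :=
  ∃ n n', INat mem stP n ∧ SuccIn mem TrueC n' n ∧
    FuncOnIn mem TrueC t (fun i => mem i n) ∧ FuncOnIn mem TrueC s (fun i => mem i n') ∧
    (∀ i w, mem i n → (FValIn mem TrueC t i w ↔ FValIn mem TrueC s i w)) ∧
    FValIn mem TrueC s n a

/-- `p` is of the form `⟨A, B, η⟩` with `A, B` standard and `η` an internal
function on `A × B`. -/
def CpForm (p A B η : M) : Prop :=
  (∃ r, OPairIn mem TrueC p A r ∧ OPairIn mem TrueC r B η) ∧ stP A ∧ stP B ∧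
    Internal mem stP η ∧
    FuncOnIn mem TrueC η (fun q => ∃ a b, mem a A ∧ mem b B ∧ OPairIn mem TrueC q a b)

/-- `z = C_p = ⋃_{a ∈ σA} ⋂_{b ∈ σB} η(a,b)` (and `z = ∅` if `p` is not of
the appropriate form). -/
def IsCp (p z : M) : Prop :=
  (∃ A B η, CpForm mem stP p A B η ∧
    ∀ x, mem x z ↔ ∃ a, stP a ∧ mem a A ∧ ∀ b, stP b → mem b B →
      ∃ q w, OPairIn mem TrueC q a b ∧ FValIn mem TrueC η q w ∧ mem x w) ∨
  ((¬ ∃ A B η, CpForm mem stP p A B η) ∧ ∀ x, ¬ mem x z)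

/-- `z` is an elementary external set. -/
def EE (z : M) : Prop := ∃ p, Internal mem stP p ∧ IsCp mem stP p z

/-- `⟨T, F⟩` is a wf pair with `T, F ∈ E`: `T` is a wf tree and
`F : Max T → I`. -/
def IsWfPairHC (T F : M) : Prop :=
  EE mem stP T ∧ EE mem stP F ∧ IsTreeSet mem stP T ∧ WfTreeSet mem T ∧
  FuncOnIn mem TrueC F (MaxIn mem T) ∧
  (∀ t y, FValIn mem TrueC F t y → Internal mem stP y)

/-- `z ∈ L[I]`: `z = F[T]` for some wf pair `⟨T, F⟩ ∈ H`, witnessed by an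
assembling function `g` (so `z = F_T(Λ)`). -/
def LIclass (z : M) : Prop :=
  ∃ T F, IsWfPairHC mem stP T F ∧ ∃ g : M → M,
    (∀ t, MaxIn mem T t → FValIn mem TrueC F t (g t)) ∧
    (∀ t, mem t T → ¬ MaxIn mem T t →
      ∀ w, mem w (g t) ↔ ∃ s, mem s T ∧ (∃ a, IsConcat mem stP s t a) ∧ w = g s) ∧
    ∃ e, (∀ w, ¬ mem w e) ∧ mem e T ∧ z = g e

end LI

end HSTF

namespace HSTF

variable {M : Type u}

/-! ### Forcing over a model of HST -/

/-- `H` is well-founded over `I`: the ordinals of the model are well-founded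
in the wider universe. -/
def WfOverI (mem : M → M → Prop) : Prop :=
  WellFounded (fun x y : M => OrdIn mem TrueC x ∧ OrdIn mem TrueC y ∧ mem x y)

/-- `a = x̆ = ⟨0, x⟩`, the canonical name for `x`. -/
def IsBreve (mem : M → M → Prop) (a x : M) : Prop :=
  ∃ e, (∀ z, ¬ mem z e) ∧ OPairIn mem TrueC a e x

/-- `a` is a `P`-name (for the class `Pp` of forcing conditions):
either a canonical name `x̆`, or a set of pairs `⟨p, b⟩` with `p` a condition
and `b` a name. -/
inductive IsName (mem : M → M → Prop) (Pp : M → Prop) : M → Prop where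
  | ground (a x : M) (h : IsBreve mem a x) : IsName mem Pp a
  | mk (a : M) (pf bf : M → M)
      (h : ∀ z, mem z a → Pp (pf z) ∧ OPairIn mem TrueC z (pf z) (bf z))
      (hrec : ∀ z, mem z a → IsName mem Pp (bf z)) : IsName mem Pp a

/-- External values of names: either an element of the model (an atom) or a
set of previously constructed values. -/
inductive GVal (M : Type u) : Type (u + 1) where
  | atom (x : M) : GVal M
  | mk (ι : Type u) (f : ι → GVal M) : GVal M

/-- The value `v` is extensionally equal to (the model element) `x`. -/
def AEq (mem : M → M → Prop) : M → GVal M → Prop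
  | x, .atom y => x = y
  | x, .mk _ f => (∀ y, mem y x → ∃ i, AEq mem y (f i)) ∧ (∀ i, ∃ y, mem y x ∧ AEq mem y (f i))

/-- Extensional equality of values (identifying a value with a model element
having the same members). -/
def GEquiv (mem : M → M → Prop) : GVal M → GVal M → Prop
  | .atom x, v => AEq mem x v
  | .mk ι f, .atom y => AEq mem y (.mk ι f)
  | .mk _ f, .mk _ g => (∀ i, ∃ j, GEquiv mem (f i) (g j)) ∧ (∀ j, ∃ i, GEquiv mem (f i) (g j))

/-- Membership between values. -/
def GMem (mem : M → M → Prop) : GVal M → GVal M → Prop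
  | u, .atom x => ∃ y, mem y x ∧ GEquiv mem u (.atom y)
  | u, .mk _ f => ∃ i, GEquiv mem u (f i)

/-- `u` is the value `a[G]` of the name `a` under the generic class `G`. -/
inductive ValRel (mem : M → M → Prop) (Pp G : M → Prop) : M → GVal M → Prop where
  | ground (a x : M) (h : IsBreve mem a x) : ValRel mem Pp G a (GVal.atom x)
  | proper (a : M) (ι : Type u) (f : ι → GVal M)
      (hng : ¬ ∃ x, IsBreve mem a x)
      (sel : M → M → M → ι)
      (h1 : ∀ z p b, mem z a → Pp p → G p → OPairIn mem TrueC z p b →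
        ValRel mem Pp G b (f (sel z p b)))
      (zf pf bf : ι → M)
      (h2 : ∀ i, mem (zf i) a ∧ Pp (pf i) ∧ G (pf i) ∧
        OPairIn mem TrueC (zf i) (pf i) (bf i))
      (h3 : ∀ i, ValRel mem Pp G (bf i) (f i)) :
      ValRel mem Pp G a (GVal.mk ι f)

/-- Carrier of the generic extension `H[G]` (before extensional collapse). -/
def HGCarrier (mem : M → M → Prop) (Pp G : M → Prop) : Type (u + 1) :=
  {w : GVal M // ∃ a, IsName mem Pp a ∧ ValRel mem Pp G a w}

/-- The generic extension `H[G] = {a[G] : a a name}`, extensional values being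
identified. -/
def HGType (mem : M → M → Prop) (Pp G : M → Prop) : Type (u + 1) :=
  Quot (fun u w : HGCarrier mem Pp G => GEquiv mem u.1 w.1)

/-- Membership `∈_G` of the extension. -/
def QMem (mem : M → M → Prop) (Pp G : M → Prop) (a b : HGType mem Pp G) : Prop :=
  ∃ u w : HGCarrier mem Pp G, a = Quot.mk _ u ∧ b = Quot.mk _ w ∧ GMem mem u.1 w.1

/-- Standardness in the extension. -/
def QSt (mem : M → M → Prop) (stP Pp G : M → Prop) (a : HGType mem Pp G) : Prop :=
  ∃ u : HGCarrier mem Pp G, a = Quot.mk _ u ∧ ∃ s, stP s ∧ GEquiv mem u.1 (GVal.atom s)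

/-- `b` (an element of `H[G]`) is the value `a[G]` of the name `a`. -/
def Represents (mem : M → M → Prop) (Pp G : M → Prop) (b : HGType mem Pp G) (a : M) : Prop :=
  ∃ u : HGCarrier mem Pp G, b = Quot.mk _ u ∧ ValRel mem Pp G a u.1

/-- `G` is generic over the model, for the conditions `Pp` ordered by `ple`:
upward closed, directed, and meeting every dense subset belonging to the model. -/
def GenericOver (mem : M → M → Prop) (Pp : M → Prop) (ple : M → M → Prop) (G : M → Prop) :
    Prop :=
  (∀ p, G p → Pp p) ∧
  (∀ p q, G p → Pp q → ple p q → G q) ∧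
  (∀ p q, G p → G q → ∃ r, G r ∧ ple r p ∧ ple r q) ∧
  (∀ D : M, (∀ z, mem z D → Pp z) → (∀ p, Pp p → ∃ q, mem q D ∧ ple q p) →
    ∃ q, G q ∧ mem q D)

/-- The auxiliary relation `p ⊩* b ∈ a`. -/
def SFo (mem : M → M → Prop) (Pp : M → Prop) (ple : M → M → Prop) (p b a : M) : Prop :=
  (∃ x, IsBreve mem a x ∧ ∃ y, mem y x ∧ IsBreve mem b y) ∨
  ((¬ ∃ x, IsBreve mem a x) ∧ ∃ q z, Pp q ∧ ple p q ∧ mem z a ∧ OPairIn mem TrueC z q b)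

/-- Forcing for atomic formulas: `AFo _ _ _ true p a b` means `p ⊩ a = b`,
and `AFo _ _ _ false p b a` means `p ⊩ b ∈ a`. -/
inductive AFo (mem : M → M → Prop) (Pp : M → Prop) (ple : M → M → Prop) :
    Bool → M → M → M → Prop where
  | breveEq (p a b x y : M) (ha : IsBreve mem a x) (hb : IsBreve mem b y) (hxy : x = y) :
      AFo mem Pp ple true p a b
  | breveMem (p b a x y : M) (hb : IsBreve mem b y) (ha : IsBreve mem a x) (hm : mem y x) :
      AFo mem Pp ple false p b a
  | eqI (p a b : M)
      (h1 : ∀ q x, Pp q → ple q p → SFo mem Pp ple q x a → AFo mem Pp ple false q x b)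
      (h2 : ∀ q y, Pp q → ple q p → SFo mem Pp ple q y b → AFo mem Pp ple false q y a) :
      AFo mem Pp ple true p a b
  | memI (p b a : M) (rf zf : M → M)
      (h1 : ∀ q, Pp q → ple q p → Pp (rf q) ∧ ple (rf q) q ∧ SFo mem Pp ple (rf q) (zf q) a)
      (h2 : ∀ q, Pp q → ple q p → AFo mem Pp ple true (rf q) b (zf q)) :
      AFo mem Pp ple false p b a

/-- The forcing relation `p ⊩ Φ`, for a formula with names as parameters. -/
def Fo (mem : M → M → Prop) (stP : M → Prop) (Pp : M → Prop) (ple : M → M → Prop) :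
    ∀ {n}, M → StFormula n → (Fin n → M) → Prop
  | _, p, .mem i j, val => AFo mem Pp ple false p (val i) (val j)
  | _, p, .eq i j, val => AFo mem Pp ple true p (val i) (val j)
  | _, p, .st i, val => ∀ q, Pp q → ple q p → ∃ r, Pp r ∧ ple r q ∧
      ∃ s b, stP s ∧ IsBreve mem b s ∧ AFo mem Pp ple true r (val i) b
  | _, p, .not φ, val => ∀ q, Pp q → ple q p → ¬ Fo mem stP Pp ple q φ val
  | _, p, .and φ ψ, val => Fo mem stP Pp ple p φ val ∧ Fo mem stP Pp ple p ψ val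
  | _, p, .all φ, val => ∀ a, IsName mem Pp a → Fo mem stP Pp ple p φ (Fin.snoc val a)

/-! ### The type-theoretic extension L^∞ and the forcing P_{LAB} -/

/-- Types of the type-theoretic extension: `0` and `τ(l₁, …, l_k)`. -/
inductive TType : Type where
  | zero : TType
  | tau (l : List TType) : TType

mutual
/-- `x` is an object of type `l` over the internal set `D`. -/
def ObjType (mem : M → M → Prop) (intl : M → Prop) (D : M) : TType → M → Prop
  | .zero, x => mem x D
  | .tau ls, x => intl x ∧ ∀ z, mem z x → ObjTuple mem intl D ls z
/-- `z` codes a tuple of objects of the given types over `D`. -/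
def ObjTuple (mem : M → M → Prop) (intl : M → Prop) (D : M) : List TType → M → Prop
  | [], z => ∀ w, ¬ mem w z
  | t :: ts, z => ∃ y r, OPairIn mem TrueC z y r ∧ ObjType mem intl D t y ∧
      ObjTuple mem intl D ts r
end

mutual
/-- The canonical extension `p^l` of an internal bijection `p` to objects of
type `l`: `PExt mem intl p l x y` means `p^l(x) = y`. -/
def PExt (mem : M → M → Prop) (intl : M → Prop) (p : M) : TType → M → M → Prop
  | .zero, x, y => FValIn mem TrueC p x y
  | .tau ls, x, y => intl y ∧
      (∀ z, mem z x → ∃ w, mem w y ∧ PExtTuple mem intl p ls z w) ∧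
      (∀ w, mem w y → ∃ z, mem z x ∧ PExtTuple mem intl p ls z w)
def PExtTuple (mem : M → M → Prop) (intl : M → Prop) (p : M) : List TType → M → M → Prop
  | [], z, w => (∀ u, ¬ mem u z) ∧ (∀ u, ¬ mem u w)
  | t :: ts, z, w => ∃ x r x' r', OPairIn mem TrueC z x r ∧ OPairIn mem TrueC w x' r' ∧
      PExt mem intl p t x x' ∧ PExtTuple mem intl p ts r r'
end

/-- Formulas of the type-theoretic extension `L^∞` of the language with symbols
`ι`; `m` counts the `L`-variables, `Γ` is the context of typed variables. -/
inductive LIF (ι : Type v) : ℕ → List TType → Type v where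
  | rel {m Γ} (s : ι) (k : ℕ) (ts : Fin k → Fin m) : LIF ι m Γ
  | eqL {m Γ} (i j : Fin m) : LIF ι m Γ
  | eqT {m Γ} (i : Fin m) (j : Fin Γ.length) (h : Γ.get j = TType.zero) : LIF ι m Γ
  | app {m Γ} (f : Fin Γ.length) (args : List (Fin Γ.length))
      (h : Γ.get f = TType.tau (args.map Γ.get)) : LIF ι m Γ
  | not {m Γ} (φ : LIF ι m Γ) : LIF ι m Γ
  | and {m Γ} (φ ψ : LIF ι m Γ) : LIF ι m Γ
  | allL {m Γ} (φ : LIF ι (m + 1) Γ) : LIF ι m Γ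
  | allT {m Γ} (t : TType) (φ : LIF ι m (t :: Γ)) : LIF ι m Γ

/-- Satisfaction of an `L^∞`-formula in the structure `A[D]` (base set `Amb`,
typed domains over `D`, interpretations `R`). -/
def SatInf {ι : Type v} (mem : M → M → Prop) (intl : M → Prop) (Amb D : M) (R : ι → M) :
    ∀ {m Γ}, LIF ι m Γ → (Fin m → M) → (Fin Γ.length → M) → Prop
  | _, _, .rel s _ ts, vL, _ => ∃ t, TupCode mem (List.ofFn fun i => vL (ts i)) t ∧ mem t (R s)
  | _, _, .eqL i j, vL, _ => vL i = vL j
  | _, _, .eqT i j _, vL, vT => vL i = vT j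
  | _, _, .app f args _, _, vT => ∃ t, TupCode mem (args.map vT) t ∧ mem t (vT f)
  | _, _, .not φ, vL, vT => ¬ SatInf mem intl Amb D R φ vL vT
  | _, _, .and φ ψ, vL, vT => SatInf mem intl Amb D R φ vL vT ∧ SatInf mem intl Amb D R ψ vL vT
  | _, _, .allL φ, vL, vT => ∀ x, mem x Amb → SatInf mem intl Amb D R φ (Fin.cons x vL) vT
  | _, _, .allT t φ, vL, vT => ∀ x, ObjType mem intl D t x →
      SatInf mem intl Amb D R φ vL (Fin.cons x vT)

/-- `p` is a condition of the forcing `P_{LAB}` with domain `D` and range `E`: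
an internal 1-1 map of `D ⊆ A` onto `E ⊆ B` preserving all closed
`L^∞`-formulas with parameters in `D^∞`. -/
def PCondOn (mem : M → M → Prop) (stP : M → Prop) {ι : Type v}
    (A B : M) (RA RB : ι → M) (D E p : M) : Prop :=
  Internal mem stP p ∧ Internal mem stP D ∧ Internal mem stP E ∧
  SubIn mem TrueC D A ∧ SubIn mem TrueC E B ∧
  FuncOnIn mem TrueC p (fun x => mem x D) ∧
  (∀ x x' y, FValIn mem TrueC p x y → FValIn mem TrueC p x' y → x = x') ∧
  (∀ y, mem y E ↔ ∃ x, mem x D ∧ FValIn mem TrueC p x y) ∧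
  (∀ (Γ : List TType) (φ : LIF ι 0 Γ) (vT wT : Fin Γ.length → M),
    (∀ j, ObjType mem (Internal mem stP) D (Γ.get j) (vT j)) →
    (∀ j, PExt mem (Internal mem stP) p (Γ.get j) (vT j) (wT j)) →
    (SatInf mem (Internal mem stP) A D RA φ Fin.elim0 vT ↔
     SatInf mem (Internal mem stP) B E RB φ Fin.elim0 wT))

/-- `p ∈ P_{LAB}`. -/
def PCond (mem : M → M → Prop) (stP : M → Prop) {ι : Type v}
    (A B : M) (RA RB : ι → M) (p : M) : Prop :=
  ∃ D E, PCondOn mem stP A B RA RB D E p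

/-! ### The product forcing Π -/

section Pi
variable (mem : M → M → Prop) (stP : M → Prop)

/-- `i = ⟨w, κ, L, A, B⟩`. -/
def Is5Tup (i w κ L A B : M) : Prop :=
  ∃ r1 r2 r3, OPairIn mem TrueC i w r1 ∧ OPairIn mem TrueC r1 κ r2 ∧
    OPairIn mem TrueC r2 L r3 ∧ OPairIn mem TrueC r3 A B

/-- `κ` is a cardinal of the internal universe. -/
def ICardinal (κ : M) : Prop :=
  Internal mem stP κ ∧ CardinalIn mem (Internal mem stP) κ

/-- `x` is internal and finite in the sense of the internal universe. -/
def IFinite (x : M) : Prop := Internal mem stP x ∧ FiniteIn mem (Internal mem stP) x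

/-- `i` is an index: an internal 5-tuple `⟨w, κ, L, A, B⟩` where `κ` is an
I-cardinal, `L` an internal language `{s_α : α < κ}`, and `A`, `B` internal
`L`-structures (coded as pairs of a base set and an interpretation map). -/
def IsIndex (i : M) : Prop :=
  Internal mem stP i ∧ ∃ w κ L A B, Is5Tup mem i w κ L A B ∧
    Internal mem stP w ∧ ICardinal mem stP κ ∧
    Internal mem stP L ∧ FuncOnIn mem TrueC L (fun α => mem α κ) ∧
    (∃ bA iA, OPairIn mem TrueC A bA iA ∧ Internal mem stP bA ∧ Internal mem stP iA ∧
      FuncOnIn mem TrueC iA (fun α => mem α κ)) ∧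
    (∃ bB iB, OPairIn mem TrueC B bB iB ∧ Internal mem stP bB ∧ Internal mem stP iB ∧
      FuncOnIn mem TrueC iB (fun α => mem α κ))

/-- `q ∈ P_{L_i A_i B_i}` for the index with components `κ, A, B`: the
language of the restricted structures has as symbols the standard `α < κ`. -/
def PCondIdx (κ A B q : M) : Prop :=
  ∀ bA iA bB iB, OPairIn mem TrueC A bA iA → OPairIn mem TrueC B bB iB →
    ∀ RA RB : {α : M // stP α ∧ mem α κ} → M,
      (∀ α, FValIn mem TrueC iA α.1 (RA α)) → (∀ α, FValIn mem TrueC iB α.1 (RB α)) →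
      PCond mem stP bA bB RA RB q

/-- `π ∈ Π`: an internal function with internal I-finite domain consisting of
indices, whose value at each index is a condition of the corresponding
forcing `P_{L_i A_i B_i}`. -/
def IsPiCond (π : M) : Prop :=
  Internal mem stP π ∧ ∃ d, Internal mem stP d ∧ IFinite mem stP d ∧
    (∀ i, mem i d → IsIndex mem stP i) ∧ FuncOnIn mem TrueC π (fun i => mem i d) ∧
    (∀ i q w κ L A B, mem i d → FValIn mem TrueC π i q → Is5Tup mem i w κ L A B →
      PCondIdx mem stP κ A B q)

/-- The order of `Π`: `π ≤ ρ` iff the domain of `π` extends that of `ρ` and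
componentwise `π_i ≤ ρ_i` (i.e. `ρ_i ⊆ π_i`). -/
def PiLe (π ρ : M) : Prop :=
  ∀ i q, FValIn mem TrueC ρ i q → ∃ q', FValIn mem TrueC π i q' ∧ SubIn mem TrueC q q'

/-- `Dc` is an open dense subclass of `Π`. -/
def PiOpenDense (Dc : M → Prop) : Prop :=
  (∀ π, Dc π → IsPiCond mem stP π) ∧
  (∀ π, IsPiCond mem stP π → ∃ ρ, Dc ρ ∧ IsPiCond mem stP ρ ∧ PiLe mem ρ π) ∧
  (∀ π ρ, IsPiCond mem stP π → Dc ρ → PiLe mem π ρ → Dc π)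

end Pi

/-! ### Miscellanea for particular statements -/

/-- `X` is infinite in the sense of the internal universe. -/
def InfiniteI (mem : M → M → Prop) (stP : M → Prop) (X : M) : Prop :=
  Internal mem stP X ∧ ¬ FiniteIn mem (Internal mem stP) X

/-- `card X < card Y` in the internal universe. -/
def CardLtI (mem : M → M → Prop) (stP : M → Prop) (X Y : M) : Prop :=
  ∃ κ μ, ICardinal mem stP κ ∧ ICardinal mem stP μ ∧ mem κ μ ∧
    EquinumIn mem (Internal mem stP) X κ ∧ EquinumIn mem (Internal mem stP) Y μ

end HSTF

namespace HSTF

namespace Aux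

variable {M : Type u}

/-! #### Formula combinators -/

def impF {n} (φ ψ : StFormula n) : StFormula n := .not (.and φ (.not ψ))
def orF {n} (φ ψ : StFormula n) : StFormula n := .not (.and (.not φ) (.not ψ))
def iffF {n} (φ ψ : StFormula n) : StFormula n := .and (impF φ ψ) (impF ψ φ)
def exF {n} (φ : StFormula (n + 1)) : StFormula n := .not (.all (.not φ))

section Eval
variable {mem : M → M → Prop} {stP : M → Prop}

@[simp] lemma eval_mem {n} (i j : Fin n) (val : Fin n → M) :
    EvalIn mem stP TrueC (.mem i j) val ↔ mem (val i) (val j) := Iff.rfl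

@[simp] lemma eval_eq {n} (i j : Fin n) (val : Fin n → M) :
    EvalIn mem stP TrueC (.eq i j) val ↔ val i = val j := Iff.rfl

@[simp] lemma eval_st {n} (i : Fin n) (val : Fin n → M) :
    EvalIn mem stP TrueC (.st i) val ↔ stP (val i) := Iff.rfl

@[simp] lemma eval_notF {n} (φ : StFormula n) (val : Fin n → M) :
    EvalIn mem stP TrueC (.not φ) val ↔ ¬ EvalIn mem stP TrueC φ val := Iff.rfl

@[simp] lemma eval_andF {n} (φ ψ : StFormula n) (val : Fin n → M) :
    EvalIn mem stP TrueC (.and φ ψ) val ↔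
      (EvalIn mem stP TrueC φ val ∧ EvalIn mem stP TrueC ψ val) := Iff.rfl

@[simp] lemma eval_allF {n} (φ : StFormula (n + 1)) (val : Fin n → M) :
    EvalIn mem stP TrueC (.all φ) val ↔
      ∀ x, EvalIn mem stP TrueC φ (Fin.snoc val x) := by
  show (∀ x, TrueC x → _) ↔ _
  simp [TrueC]

@[simp] lemma eval_impF {n} (φ ψ : StFormula n) (val : Fin n → M) :
    EvalIn mem stP TrueC (impF φ ψ) val ↔
      (EvalIn mem stP TrueC φ val → EvalIn mem stP TrueC ψ val) := by
  simp only [impF, eval_notF, eval_andF]; tauto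

@[simp] lemma eval_orF {n} (φ ψ : StFormula n) (val : Fin n → M) :
    EvalIn mem stP TrueC (orF φ ψ) val ↔
      (EvalIn mem stP TrueC φ val ∨ EvalIn mem stP TrueC ψ val) := by
  simp only [orF, eval_notF, eval_andF]; tauto

@[simp] lemma eval_iffF {n} (φ ψ : StFormula n) (val : Fin n → M) :
    EvalIn mem stP TrueC (iffF φ ψ) val ↔
      (EvalIn mem stP TrueC φ val ↔ EvalIn mem stP TrueC ψ val) := by
  simp only [iffF, eval_impF, eval_andF, iff_iff_implies_and_implies]

@[simp] lemma eval_exF {n} (φ : StFormula (n + 1)) (val : Fin n → M) :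
    EvalIn mem stP TrueC (exF φ) val ↔
      ∃ x, EvalIn mem stP TrueC φ (Fin.snoc val x) := by
  simp [exF]

end Eval

/-! #### Coded set-theoretic formulas -/

def singF {n} (s x : Fin n) : StFormula n :=
  .all (iffF (.mem (Fin.last n) s.castSucc) (.eq (Fin.last n) x.castSucc))

def upairF {n} (p x y : Fin n) : StFormula n :=
  .all (iffF (.mem (Fin.last n) p.castSucc)
    (orF (.eq (Fin.last n) x.castSucc) (.eq (Fin.last n) y.castSucc)))

def opairF {n} (p x y : Fin n) : StFormula n :=
  exF (exF (.and (singF ((Fin.last n).castSucc) x.castSucc.castSucc)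
    (.and (upairF (Fin.last (n + 1)) x.castSucc.castSucc y.castSucc.castSucc)
      (upairF p.castSucc.castSucc ((Fin.last n).castSucc) (Fin.last (n + 1))))))

def fvalF {n} (f x y : Fin n) : StFormula n :=
  exF (.and (.mem (Fin.last n) f.castSucc) (opairF (Fin.last n) x.castSucc y.castSucc))

def succF {n} (s x : Fin n) : StFormula n :=
  .all (iffF (.mem (Fin.last n) s.castSucc)
    (orF (.mem (Fin.last n) x.castSucc) (.eq (Fin.last n) x.castSucc)))

section Eval2
variable {mem : M → M → Prop} {stP : M → Prop}

@[simp] lemma eval_singF {n} (s x : Fin n) (val : Fin n → M) :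
    EvalIn mem stP TrueC (singF s x) val ↔ SingIn mem TrueC (val s) (val x) := by
  simp [singF, SingIn, TrueC]

@[simp] lemma eval_upairF {n} (p x y : Fin n) (val : Fin n → M) :
    EvalIn mem stP TrueC (upairF p x y) val ↔ UPairIn mem TrueC (val p) (val x) (val y) := by
  simp [upairF, UPairIn, TrueC]

@[simp] lemma eval_opairF {n} (p x y : Fin n) (val : Fin n → M) :
    EvalIn mem stP TrueC (opairF p x y) val ↔ OPairIn mem TrueC (val p) (val x) (val y) := by
  simp [opairF, OPairIn, TrueC]

@[simp] lemma eval_fvalF {n} (f x y : Fin n) (val : Fin n → M) :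
    EvalIn mem stP TrueC (fvalF f x y) val ↔ FValIn mem TrueC (val f) (val x) (val y) := by
  simp [fvalF, FValIn, TrueC]


@[simp] lemma eval_succF {n} (s x : Fin n) (val : Fin n → M) :
    EvalIn mem stP TrueC (succF s x) val ↔ SuccIn mem TrueC (val s) (val x) := by
  simp [succF, SuccIn, TrueC]

end Eval2

/-! #### The step operation, condensation approximations, iterations -/

section Sem
variable (mem : M → M → Prop) (stP : M → Prop)

/-- `u' = σ(u ∪ ⋃u)`. -/
def StepSem (u u' : M) : Prop :=
  ∀ t, mem t u' ↔ stP t ∧ (mem t u ∨ ∃ y, mem y u ∧ mem t y)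

/-- `F` is a condensation approximation: a set-coded function, defined on
standard sets, whose domain is closed under standard membership, satisfying
the condensation recursion equation. -/
def ApproxSem (F : M) : Prop :=
  (∀ p, mem p F → ∃ z a, OPairIn mem TrueC p z a ∧ stP z) ∧
  (∀ z a b, FValIn mem TrueC F z a → FValIn mem TrueC F z b → a = b) ∧
  (∀ z a, FValIn mem TrueC F z a → ∀ z', stP z' → mem z' z → ∃ b, FValIn mem TrueC F z' b) ∧
  (∀ z a, FValIn mem TrueC F z a → ∀ t, mem t a ↔ ∃ z', stP z' ∧ mem z' z ∧
    FValIn mem TrueC F z' t)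

/-- `f` is an iteration of the step operation along `k` starting at `u0`
(with `e` the empty set). -/
def ItrSem (e u0 k f : M) : Prop :=
  FValIn mem TrueC f e u0 ∧
  (∀ j, mem j k → ∀ j', SuccIn mem TrueC j' j → ∀ a, FValIn mem TrueC f j a →
    ∀ b, FValIn mem TrueC f j' b → StepSem mem stP a b) ∧
  (∀ j, mem j k ∨ j = k → ∃ a, FValIn mem TrueC f j a) ∧
  (∀ j a b, FValIn mem TrueC f j a → FValIn mem TrueC f j b → a = b) ∧
  (∀ p, mem p f → ∃ j a, OPairIn mem TrueC p j a ∧ (mem j k ∨ j = k))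

end Sem

def stepF {n} (a b : Fin n) : StFormula n :=
  .all (iffF (.mem (Fin.last n) b.castSucc)
    (.and (.st (Fin.last n))
      (orF (.mem (Fin.last n) a.castSucc)
        (exF (.and (.mem (Fin.last (n + 1)) a.castSucc.castSucc)
          (.mem ((Fin.last n).castSucc) (Fin.last (n + 1))))))))

def approxF {n} (F : Fin n) : StFormula n :=
  .and (.all (impF (.mem (Fin.last n) F.castSucc)
      (exF (exF (.and (opairF ((Fin.last n).castSucc.castSucc) ((Fin.last (n + 1)).castSucc)
            (Fin.last (n + 2)))
        (.st ((Fin.last (n + 1)).castSucc)))))))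
  (.and (.all (.all (.all
      (impF (fvalF F.castSucc.castSucc.castSucc ((Fin.last n).castSucc.castSucc)
          ((Fin.last (n + 1)).castSucc))
        (impF (fvalF F.castSucc.castSucc.castSucc ((Fin.last n).castSucc.castSucc)
            (Fin.last (n + 2)))
          (.eq ((Fin.last (n + 1)).castSucc) (Fin.last (n + 2))))))))
  (.and (.all (.all
      (impF (fvalF F.castSucc.castSucc ((Fin.last n).castSucc) (Fin.last (n + 1)))
        (.all (impF (.and (.st (Fin.last (n + 2)))
            (.mem (Fin.last (n + 2)) ((Fin.last n).castSucc.castSucc)))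
          (exF (fvalF F.castSucc.castSucc.castSucc.castSucc
            ((Fin.last (n + 2)).castSucc) (Fin.last (n + 3)))))))))
    (.all (.all
      (impF (fvalF F.castSucc.castSucc ((Fin.last n).castSucc) (Fin.last (n + 1)))
        (.all (iffF (.mem (Fin.last (n + 2)) ((Fin.last (n + 1)).castSucc))
          (exF (.and (.st (Fin.last (n + 3)))
            (.and (.mem (Fin.last (n + 3)) ((Fin.last n).castSucc.castSucc.castSucc))
              (fvalF F.castSucc.castSucc.castSucc.castSucc (Fin.last (n + 3))
                ((Fin.last (n + 2)).castSucc))))))))))))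

def itrF {n} (k f e u0 : Fin n) : StFormula n :=
  .and (fvalF f e u0)
  (.and (.all (impF (.mem (Fin.last n) k.castSucc)
      (.all (impF (succF (Fin.last (n + 1)) ((Fin.last n).castSucc))
        (.all (impF (fvalF f.castSucc.castSucc.castSucc ((Fin.last n).castSucc.castSucc)
            (Fin.last (n + 2)))
          (.all (impF (fvalF f.castSucc.castSucc.castSucc.castSucc
              ((Fin.last (n + 1)).castSucc.castSucc) (Fin.last (n + 3)))
            (stepF ((Fin.last (n + 2)).castSucc) (Fin.last (n + 3)))))))))))
  (.and (.all (impF (orF (.mem (Fin.last n) k.castSucc) (.eq (Fin.last n) k.castSucc))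
      (exF (fvalF f.castSucc.castSucc ((Fin.last n).castSucc) (Fin.last (n + 1))))))
  (.and (.all (.all (.all
      (impF (fvalF f.castSucc.castSucc.castSucc ((Fin.last n).castSucc.castSucc)
          ((Fin.last (n + 1)).castSucc))
        (impF (fvalF f.castSucc.castSucc.castSucc ((Fin.last n).castSucc.castSucc)
            (Fin.last (n + 2)))
          (.eq ((Fin.last (n + 1)).castSucc) (Fin.last (n + 2))))))))
    (.all (impF (.mem (Fin.last n) f.castSucc)
      (exF (exF (.and (opairF ((Fin.last n).castSucc.castSucc) ((Fin.last (n + 1)).castSucc)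
          (Fin.last (n + 2)))
        (orF (.mem ((Fin.last (n + 1)).castSucc) k.castSucc.castSucc.castSucc)
          (.eq ((Fin.last (n + 1)).castSucc) k.castSucc.castSucc.castSucc))))))))))

section Eval3
variable {mem : M → M → Prop} {stP : M → Prop}

@[simp] lemma eval_stepF {n} (a b : Fin n) (val : Fin n → M) :
    EvalIn mem stP TrueC (stepF a b) val ↔ StepSem mem stP (val a) (val b) := by
  simp [stepF, StepSem]

@[simp] lemma eval_approxF {n} (F : Fin n) (val : Fin n → M) :
    EvalIn mem stP TrueC (approxF F) val ↔ ApproxSem mem stP (val F) := by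
  simp only [approxF, ApproxSem, eval_andF, eval_allF, eval_impF, eval_exF, eval_iffF,
    eval_mem, eval_eq, eval_st, eval_fvalF, eval_opairF, Fin.snoc_castSucc, Fin.snoc_last]
  tauto

@[simp] lemma eval_itrF {n} (k f e u0 : Fin n) (val : Fin n → M) :
    EvalIn mem stP TrueC (itrF k f e u0) val ↔
      ItrSem mem stP (val e) (val u0) (val k) (val f) := by
  simp only [itrF, ItrSem, eval_andF, eval_allF, eval_impF, eval_exF, eval_iffF, eval_orF,
    eval_mem, eval_eq, eval_st, eval_fvalF, eval_opairF, eval_succF, eval_stepF,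
    Fin.snoc_castSucc, Fin.snoc_last]


end Eval3

/-! #### Basic set-theoretic toolkit inside a model of HST -/

section Toolkit
set_option linter.unusedSectionVars false

@[simp] lemma snoc_zero {α : Sort*} (val : Fin 0 → α) (z : α) :
    (Fin.snoc val z : Fin 1 → α) 0 = z := rfl

variable {mem : M → M → Prop} {stP : M → Prop} (hH : HSTModel mem stP)
include hH

lemma empty_exists : ∃ e, ∀ z, ¬ mem z e := by
  obtain ⟨w, -, -⟩ := hH.infinity
  obtain ⟨s, hs⟩ := hH.separation (n := 0)
    (.not (.eq (Fin.last 0) (Fin.last 0))) Fin.elim0 w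
  refine ⟨s, fun z hz => ?_⟩
  have := (hs z).1 hz
  simp at this

lemma upair_exists (x y : M) : ∃ p, ∀ z, mem z p ↔ z = x ∨ z = y := by
  obtain ⟨p, hp⟩ := hH.pairing x y
  exact ⟨p, fun z => hp z trivial⟩

lemma sing_exists (x : M) : ∃ s, ∀ z, mem z s ↔ z = x := by
  obtain ⟨p, hp⟩ := upair_exists hH x x
  exact ⟨p, fun z => by rw [hp z, or_self]⟩

lemma opair_exists (x y : M) : ∃ p, OPairIn mem TrueC p x y := by
  obtain ⟨s, hs⟩ := sing_exists hH x
  obtain ⟨t, ht⟩ := upair_exists hH x y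
  obtain ⟨p, hp⟩ := upair_exists hH s t
  exact ⟨p, s, t, trivial, trivial, fun z _ => hs z, fun z _ => ht z, fun z _ => hp z⟩

lemma opair_inj {p x y x' y' : M} (h : OPairIn mem TrueC p x y)
    (h' : OPairIn mem TrueC p x' y') : x = x' ∧ y = y' := by
  obtain ⟨s, t, -, -, hs, ht, hp⟩ := h
  obtain ⟨s', t', -, -, hs', ht', hp'⟩ := h'
  simp only [SingIn, UPairIn, TrueC, true_implies, forall_const] at hs ht hp hs' ht' hp'
  have hsmem : s = s' ∨ s = t' := (hp' s).1 ((hp s).2 (Or.inl rfl))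
  have htmem : t = s' ∨ t = t' := (hp' t).1 ((hp t).2 (Or.inr rfl))
  have hxx : x = x' := by
    rcases hsmem with h1 | h1
    · exact (hs' x).1 (h1 ▸ (hs x).2 rfl)
    · have : mem x' s := h1 ▸ ((ht' x').2 (Or.inl rfl))
      exact ((hs x').1 this).symm
  have hyy : y = y' := by
    rcases htmem with h1 | h1
    · -- t = s' = {x'}
      have hyx' : y = x' := (hs' y).1 (h1 ▸ (ht y).2 (Or.inr rfl))
      have ht'mem : t' = s ∨ t' = t := (hp t').1 ((hp' t').2 (Or.inr rfl))
      have hy't : mem y' t' := (ht' y').2 (Or.inr rfl)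
      rcases ht'mem with h2 | h2
      · have : y' = x := (hs y').1 (h2 ▸ hy't)
        rw [hyx', ← hxx, this]
      · rcases (ht y').1 (h2 ▸ hy't) with h3 | h3
        · rw [hyx', ← hxx, h3]
        · exact h3.symm
    · rcases (ht' y).1 (h1 ▸ (ht y).2 (Or.inr rfl)) with h2 | h2
      · -- y = x'
        rcases (ht y').1 (h1.symm ▸ (ht' y').2 (Or.inr rfl)) with h3 | h3
        · rw [h2, ← hxx, ← h3]
        · exact h3.symm
      · exact h2
  exact ⟨hxx, hyy⟩

lemma bigUnion_exists (x : M) : ∃ u, ∀ z, mem z u ↔ ∃ y, mem y x ∧ mem z y :=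
  hH.union x

lemma binUnion_exists (x y : M) : ∃ u, ∀ z, mem z u ↔ mem z x ∨ mem z y := by
  obtain ⟨p, hp⟩ := upair_exists hH x y
  obtain ⟨u, hu⟩ := hH.union p
  refine ⟨u, fun z => (hu z).trans ?_⟩
  constructor
  · rintro ⟨w, hw, hzw⟩
    rcases (hp w).1 hw with rfl | rfl
    · exact Or.inl hzw
    · exact Or.inr hzw
  · rintro (hz | hz)
    · exact ⟨x, (hp x).2 (Or.inl rfl), hz⟩
    · exact ⟨y, (hp y).2 (Or.inr rfl), hz⟩

lemma insert_exists (F p : M) : ∃ G, ∀ z, mem z G ↔ mem z F ∨ z = p := by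
  obtain ⟨s, hs⟩ := sing_exists hH p
  obtain ⟨u, hu⟩ := binUnion_exists hH F s
  exact ⟨u, fun z => (hu z).trans (by rw [hs z])⟩

lemma succ_exists (x : M) : ∃ s, SuccIn mem TrueC s x := by
  obtain ⟨s, hs⟩ := binUnion_exists hH x x
  obtain ⟨u, hu⟩ := insert_exists hH x x
  exact ⟨u, fun z _ => hu z⟩

lemma sigma_exists (x : M) : ∃ s, ∀ z, mem z s ↔ mem z x ∧ stP z := by
  obtain ⟨s, hs⟩ := hH.separation (n := 0) (.st (Fin.last 0)) Fin.elim0 x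
  refine ⟨s, fun z => (hs z).trans (by simp)⟩

lemma fval_intro {f p x y : M} (hp : mem p f) (ho : OPairIn mem TrueC p x y) :
    FValIn mem TrueC f x y := ⟨p, trivial, hp, ho⟩

/-- Every nonempty set all of whose elements are standard has an `∈`-minimal
element (Standardization + Foundation over `S`). -/
lemma stdMin (D : M) (hst : ∀ z, mem z D → stP z) (hne : ∃ z, mem z D) :
    ∃ z, mem z D ∧ ∀ u, mem u z → ¬ mem u D := by
  obtain ⟨Y, hY, hYiff⟩ := hH.standardization D
  obtain ⟨z0, hz0⟩ := hne
  have hz0st := hst z0 hz0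
  have hz0Y : mem z0 Y := (hYiff z0 hz0st).2 hz0
  obtain ⟨y, hyst, hyY, hymin⟩ := hH.zfc_st.foundation Y hY ⟨z0, hz0st, hz0Y⟩
  refine ⟨y, (hYiff y hyst).1 hyY, fun u hu huD => ?_⟩
  exact hymin u (hst u huD) hu ((hYiff u (hst u huD)).2 huD)

lemma nat_zero {e : M} (he : ∀ z, ¬ mem z e) : NatIn mem TrueC e := by
  refine ⟨⟨fun y _ hy => absurd hy (he y),
    fun y z _ _ hy => absurd hy (he y),
    fun y z w _ _ _ hy => absurd hy (he y),
    fun y _ hy => absurd hy (he y),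
    fun Y _ hsub ⟨w, _, hw⟩ => absurd (hsub w trivial hw) (he w)⟩, ?_⟩
  rintro y - (rfl | hy)
  · exact Or.inl fun z _ hz => he z hz
  · exact absurd hy (he y)

lemma nat_succ {N s : M} (hN : NatIn mem TrueC N) (hs : SuccIn mem TrueC s N) :
    NatIn mem TrueC s := by
  obtain ⟨⟨htr, htri, ht3, hirr, hwf⟩, hcl⟩ := hN
  have hsmem : ∀ z, mem z s ↔ mem z N ∨ z = N := fun z => hs z trivial
  have htrN : ∀ {a b}, mem a b → mem b N → mem a N := fun {a b} hab hbN =>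
    htr b trivial hbN a trivial hab
  have hirrN : ¬ mem N N := fun hNN => hirr N trivial hNN hNN
  refine ⟨⟨?_, ?_, ?_, ?_, ?_⟩, ?_⟩
  · -- transitive
    intro y _ hy z _ hz
    rcases (hsmem y).1 hy with hyN | rfl
    · exact (hsmem z).2 (Or.inl (htrN hz hyN))
    · exact (hsmem z).2 (Or.inl hz)
  · intro y z _ _ hy hz
    rcases (hsmem y).1 hy with hyN | rfl <;> rcases (hsmem z).1 hz with hzN | rfl
    · exact htri y z trivial trivial hyN hzN
    · exact Or.inl hyN
    · exact Or.inr (Or.inr hzN)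
    · exact Or.inr (Or.inl rfl)
  · intro y z w _ _ _ hy hz hw hyz hzw
    rcases (hsmem w).1 hw with hwN | rfl
    · have hzN := htrN hzw hwN
      have hyN := htrN hyz hzN
      exact ht3 y z w trivial trivial trivial hyN hzN hwN hyz hzw
    · exact htrN hyz hzw
  · intro y _ hy hyy
    rcases (hsmem y).1 hy with hyN | rfl
    · exact hirr y trivial hyN hyy
    · exact hirrN hyy
  · -- well-foundedness
    intro Y _ hsub ⟨w0, _, hw0⟩
    obtain ⟨Y', hY'⟩ := hH.separation (n := 1)
      (.mem (Fin.last 1) ((0 : Fin 1).castSucc)) (fun _ => N) Y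
    have hY'iff : ∀ z, mem z Y' ↔ mem z Y ∧ mem z N := fun z => by
      simpa [Fin.snoc] using hY' z
    by_cases hne : ∃ z, mem z Y'
    · obtain ⟨w, -, hwY', hwmin⟩ := hwf Y' trivial
        (fun z _ hz => ((hY'iff z).1 hz).2) (⟨hne.choose, trivial, hne.choose_spec⟩)
      have hwY := ((hY'iff w).1 hwY').1
      have hwN := ((hY'iff w).1 hwY').2
      refine ⟨w, trivial, hwY, fun u _ hu huY => ?_⟩
      exact hwmin u trivial hu ((hY'iff u).2 ⟨huY, htrN hu hwN⟩)
    · push_neg at hne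
      have hw0s := hsub w0 trivial hw0
      have hw0N : w0 = N := by
        rcases (hsmem w0).1 hw0s with h | h
        · exact absurd ((hY'iff w0).2 ⟨hw0, h⟩) (hne w0)
        · exact h
      refine ⟨w0, trivial, hw0, fun u _ hu huY => ?_⟩
      exact hne u ((hY'iff u).2 ⟨huY, hw0N ▸ hu⟩)
  · -- every member (or itself) is empty or a successor
    rintro y - (rfl | hy)
    · exact Or.inr ⟨N, trivial, hs⟩
    · rcases (hsmem y).1 hy with hyN | rfl
      · exact hcl y trivial (Or.inr hyN)
      · exact hcl y trivial (Or.inl rfl)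

/-- The set of all natural numbers of the model, obtained from Dependent
Choice. -/
lemma omegaH_exists : ∃ w, ∀ z, mem z w ↔ NatIn mem TrueC z := by
  obtain ⟨e, he⟩ := empty_exists hH
  obtain ⟨X, hX⟩ := sing_exists hH e
  obtain ⟨q, hq⟩ := opair_exists hH e e
  obtain ⟨R, hR⟩ := sing_exists hH q
  obtain ⟨w, f, hw, -⟩ := hH.dep_choice X R e ((hX e).2 rfl)
    (fun x hx => ⟨e, (hX e).2 rfl, q, (hR q).2 rfl, by
      rcases (hX x).1 hx with rfl; exact hq⟩)
  exact ⟨w, hw⟩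

/-- Internal induction over the natural numbers of the model, for
(deeply embedded) `∈`-`st`-formula classes. -/
lemma nat_ind {n} (φ : StFormula (n + 1)) (val : Fin n → M) (N : M)
    (hN : NatIn mem TrueC N)
    (base : ∀ j, (mem j N ∨ j = N) → (∀ u, ¬ mem u j) →
      EvalIn mem stP TrueC φ (Fin.snoc val j))
    (step : ∀ j z, (mem j N ∨ j = N) → SuccIn mem TrueC j z → mem z j →
      (mem z N ∨ z = N) → EvalIn mem stP TrueC φ (Fin.snoc val z) →
      EvalIn mem stP TrueC φ (Fin.snoc val j)) :
    ∀ j, (mem j N ∨ j = N) → EvalIn mem stP TrueC φ (Fin.snoc val j) := by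
  obtain ⟨s, hs⟩ := succ_exists hH N
  have hNs := nat_succ hH hN hs
  have hsmem : ∀ z, mem z s ↔ mem z N ∨ z = N := fun z => hs z trivial
  obtain ⟨D, hD⟩ := hH.separation (.not φ) val s
  have hDiff : ∀ z, mem z D ↔ mem z s ∧ ¬ EvalIn mem stP TrueC φ (Fin.snoc val z) :=
    fun z => (hD z)
  intro j hj
  by_contra hbad
  have hjD : mem j D := (hDiff j).2 ⟨(hsmem j).2 hj, hbad⟩
  obtain ⟨j1, -, hj1D, hj1min⟩ := hNs.1.2.2.2.2 D trivial
    (fun z _ hz => ((hDiff z).1 hz).1) ⟨j, trivial, hjD⟩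
  have hj1s := ((hDiff j1).1 hj1D).1
  have hj1bad := ((hDiff j1).1 hj1D).2
  have hj1Nj : mem j1 N ∨ j1 = N := (hsmem j1).1 hj1s
  rcases hNs.2 j1 trivial (Or.inr hj1s) with hemp | ⟨z, -, hzsucc⟩
  · exact hj1bad (base j1 hj1Nj (fun u hu => hemp u trivial hu))
  · have hzj1 : mem z j1 := (hzsucc z trivial).2 (Or.inr rfl)
    have hzs : mem z s := hNs.1.1 j1 trivial hj1s z trivial hzj1
    have hzgood : EvalIn mem stP TrueC φ (Fin.snoc val z) := by
      by_contra hzbad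
      exact hj1min z trivial hzj1 ((hDiff z).2 ⟨hzs, hzbad⟩)
    exact hj1bad (step j1 z hj1Nj hzsucc hzj1 ((hsmem z).1 hzs) hzgood)

end Toolkit

section Toolkit1b
variable {mem : M → M → Prop}

lemma ord_mem {x y : M} (hx : OrdIn mem TrueC x) (hy : mem y x) : OrdIn mem TrueC y := by
  obtain ⟨tr, tri, t3, irr, wf⟩ := hx
  have hsub : ∀ z, mem z y → mem z x := fun z hz => tr y trivial hy z trivial hz
  refine ⟨?_, ?_, ?_, ?_, ?_⟩
  · intro u _ hu v _ hv
    have hux : mem u y := hu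
    have hvx : mem v x := tr u trivial (hsub u hu) v trivial hv
    exact t3 v u y trivial trivial trivial hvx (hsub u hu) hy hv hu
  · intro u v _ _ hu hv
    exact tri u v trivial trivial (hsub u hu) (hsub v hv)
  · intro u v w _ _ _ hu hv hw
    exact t3 u v w trivial trivial trivial (hsub u hu) (hsub v hv) (hsub w hw)
  · intro u _ hu
    exact irr u trivial (hsub u hu)
  · intro Y _ hY hne
    exact wf Y trivial (fun z hz hzY => hsub z (hY z hz hzY)) hne

lemma nat_mem {N z : M} (hN : NatIn mem TrueC N) (hz : mem z N) : NatIn mem TrueC z := by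
  refine ⟨ord_mem hN.1 hz, ?_⟩
  rintro y - (rfl | hy)
  · exact hN.2 y trivial (Or.inr hz)
  · exact hN.2 y trivial (Or.inr (hN.1.1 z trivial hz y trivial hy))

lemma nat_irrefl {N : M} (hN : NatIn mem TrueC N) : ¬ mem N N :=
  fun h => hN.1.2.2.2.1 N trivial h h

end Toolkit1b

section Toolkit2
set_option linter.unusedSectionVars false
variable {mem : M → M → Prop} {stP : M → Prop} (hH : HSTModel mem stP)
include hH

/-- No standard set is a member of itself. -/
lemma st_irrefl {y : M} (hy : stP y) : ¬ mem y y := by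
  intro hyy
  obtain ⟨p, hpst, hp⟩ := hH.zfc_st.pair y y hy hy
  have hyp : mem y p := (hp y hy).2 (Or.inl rfl)
  obtain ⟨u, hust, hup, humin⟩ := hH.zfc_st.foundation p hpst ⟨y, hy, hyp⟩
  have huy : u = y := by rcases (hp u hust).1 hup with h | h <;> exact h
  exact humin y hy (by rw [huy]; exact hyy) hyp

lemma step_exists (u : M) : ∃ u', StepSem mem stP u u' := by
  obtain ⟨b, hb⟩ := hH.union u
  obtain ⟨c, hc⟩ := binUnion_exists hH u b
  obtain ⟨s, hs⟩ := sigma_exists hH c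
  refine ⟨s, fun t => (hs t).trans ?_⟩
  rw [hc t, hb t]
  tauto

lemma step_det {u a b : M} (ha : StepSem mem stP u a) (hb : StepSem mem stP u b) :
    a = b := hH.ext a b (fun t => (ha t).trans (hb t).symm)

lemma fval_insert {f p x y v : M} (hp : OPairIn mem TrueC p x y)
    (hG : ∀ w, mem w v ↔ mem w f ∨ w = p) :
    ∀ z' a, FValIn mem TrueC v z' a ↔
      FValIn mem TrueC f z' a ∨ (z' = x ∧ a = y) := by
  intro z' a
  constructor
  · rintro ⟨q, -, hq, hoq⟩
    rcases (hG q).1 hq with hqf | rfl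
    · exact Or.inl ⟨q, trivial, hqf, hoq⟩
    · exact Or.inr ⟨(opair_inj hH hoq hp).1, (opair_inj hH hoq hp).2⟩
  · rintro (⟨q, -, hq, hoq⟩ | ⟨rfl, rfl⟩)
    · exact ⟨q, trivial, (hG q).2 (Or.inl hq), hoq⟩
    · exact ⟨p, trivial, (hG p).2 (Or.inr rfl), hp⟩

lemma itr_base {e u0 : M} (he : ∀ z, ¬ mem z e) :
    ∃ f, ItrSem mem stP e u0 e f := by
  obtain ⟨p, hp⟩ := opair_exists hH e u0
  obtain ⟨f, hf⟩ := sing_exists hH p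
  have hFV : ∀ j a, FValIn mem TrueC f j a ↔ j = e ∧ a = u0 := by
    intro j a
    constructor
    · rintro ⟨q, -, hq, hoq⟩
      rcases (hf q).1 hq with rfl
      exact ⟨(opair_inj hH hoq hp).1, (opair_inj hH hoq hp).2⟩
    · rintro ⟨rfl, rfl⟩
      exact ⟨p, trivial, (hf p).2 rfl, hp⟩
  refine ⟨f, (hFV e u0).2 ⟨rfl, rfl⟩, ?_, ?_, ?_, ?_⟩
  · intro j hj
    exact absurd hj (he j)
  · rintro j (hj | rfl)
    · exact absurd hj (he j)
    · exact ⟨u0, (hFV j u0).2 ⟨rfl, rfl⟩⟩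
  · intro j a b ha hb
    rw [((hFV j a).1 ha).2, ((hFV j b).1 hb).2]
  · intro q hq
    rcases (hf q).1 hq with rfl
    exact ⟨e, u0, hp, Or.inr rfl⟩

lemma itr_succ {e u0 k f k' u u' : M} (hf : ItrSem mem stP e u0 k f)
    (hk : NatIn mem TrueC k) (hsucc : SuccIn mem TrueC k' k)
    (hu : FValIn mem TrueC f k u) (hu' : StepSem mem stP u u') :
    ∃ f', ItrSem mem stP e u0 k' f' ∧ FValIn mem TrueC f' k' u' := by
  obtain ⟨hf0, hfstep, hftot, hffun, hfdom⟩ := hf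
  have hk' : NatIn mem TrueC k' := nat_succ hH hk hsucc
  have hk'mem : ∀ z, mem z k' ↔ mem z k ∨ z = k := fun z => hsucc z trivial
  have hkk' : mem k k' := (hk'mem k).2 (Or.inr rfl)
  have hk'ne : k' ≠ k := fun h => nat_irrefl hk (h ▸ hkk')
  have hk'nk : ¬ mem k' k := fun h =>
    hk'.1.2.2.2.1 k' trivial ((hk'mem k').2 (Or.inl h))
      (hk'.1.1 k trivial hkk' k' trivial h)
  obtain ⟨p, hp⟩ := opair_exists hH k' u'
  obtain ⟨f', hf'⟩ := insert_exists hH f p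
  have hFV := fval_insert hH hp hf'
  have hfval_dom : ∀ j a, FValIn mem TrueC f j a → mem j k ∨ j = k := by
    rintro j a ⟨q, -, hq, hoq⟩
    obtain ⟨j2, a2, ho2, hj2⟩ := hfdom q hq
    rcases opair_inj hH hoq ho2 with ⟨rfl, rfl⟩
    exact hj2
  have hjnek' : ∀ j a, FValIn mem TrueC f j a → j ≠ k' := by
    intro j a hja hjeq
    subst hjeq
    rcases hfval_dom j a hja with h | h
    · exact hk'nk h
    · exact hk'ne h
  refine ⟨f', ⟨?_, ?_, ?_, ?_, ?_⟩, (hFV k' u').2 (Or.inr ⟨rfl, rfl⟩)⟩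
  · exact (hFV e u0).2 (Or.inl hf0)
  · -- step clause
    intro j hj j'' hj''succ a ha b hb
    have hjk : mem j k ∨ j = k := (hk'mem j).1 hj
    have hjne : j ≠ k' := fun h => nat_irrefl hk' (h ▸ hj)
    have ha' : FValIn mem TrueC f j a := by
      rcases (hFV j a).1 ha with h | ⟨rfl, rfl⟩
      · exact h
      · exact absurd rfl hjne
    have hjj'' : mem j j'' := (hj''succ j trivial).2 (Or.inr rfl)
    rcases (hFV j'' b).1 hb with hbf | ⟨hje, hbe⟩
    · -- b is an f-value
      rcases hjk with hjk1 | hjk1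
      · exact hfstep j hjk1 j'' hj''succ a ha' b hbf
      · -- j = k, but then j'' cannot be in f's domain
        exfalso
        have hjdom := hfval_dom j'' b hbf
        rcases hjdom with h | h
        · have : mem j k := hk.1.1 j'' trivial h j trivial hjj''
          rw [hjk1] at this
          exact nat_irrefl hk this
        · rw [hjk1, h] at hjj''
          exact nat_irrefl hk hjj''
    · -- j'' = k', b = u' : then j = k
      rw [hje] at hjj'' hj''succ
      rw [hbe]
      have hjeqk : j = k := by
        rcases hjk with hjk1 | hjk1
        · rcases (hj''succ k trivial).1 hkk' with h | h
          · exfalso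
            have hjk' : mem j k' := (hk'mem j).2 (Or.inl hjk1)
            have : mem k k :=
              hk'.1.2.2.1 k j k trivial trivial trivial hkk' hjk' hkk' h hjk1
            exact nat_irrefl hk this
          · exact h.symm
        · exact hjk1
      subst hjeqk
      have : a = u := hffun j a u ha' hu
      subst this
      exact hu'
  · rintro j hj
    rcases hj with hj | rfl
    · rcases (hk'mem j).1 hj with hjk | rfl
      · obtain ⟨a, ha⟩ := hftot j (Or.inl hjk)
        exact ⟨a, (hFV j a).2 (Or.inl ha)⟩
      · exact ⟨u, (hFV j u).2 (Or.inl hu)⟩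
    · exact ⟨u', (hFV j u').2 (Or.inr ⟨rfl, rfl⟩)⟩
  · intro j a b ha hb
    rcases (hFV j a).1 ha with haf | ⟨rfl, rfl⟩ <;> rcases (hFV j b).1 hb with hbf | hbe
    · exact hffun j a b haf hbf
    · exact absurd hbe.1 (hjnek' j a haf)
    · exact absurd rfl (hjnek' j b hbf)
    · rw [hbe.2]
  · intro q hq
    rcases (hf' q).1 hq with hqf | rfl
    · obtain ⟨j, a, ho, hj⟩ := hfdom q hqf
      refine ⟨j, a, ho, Or.inl ((hk'mem j).2 hj)⟩
    · exact ⟨k', u', hp, Or.inr rfl⟩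

/-- Agreement of iterations: any two iterations defined at `j` take the same
value there. -/
lemma itr_agree {e u0 w : M} (he : ∀ z, ¬ mem z e)
    (hw : ∀ z, mem z w ↔ NatIn mem TrueC z) :
    ∀ k k' f g j a b, mem k w → mem k' w → ItrSem mem stP e u0 k f →
      ItrSem mem stP e u0 k' g → (mem j k ∨ j = k) → (mem j k' ∨ j = k') →
      FValIn mem TrueC f j a → FValIn mem TrueC g j b → a = b := by
  intro k k' f g j a b hkw hk'w hf hg hjk hjk' ha hb
  have hkN : NatIn mem TrueC k := (hw k).1 hkw
  let val : Fin 4 → M := ![w, e, u0, f]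
  let φ : StFormula 5 :=
    .all (.all (.all (.all (impF
      (.and (.mem ((Fin.last 5).castSucc.castSucc.castSucc)
          ((0 : Fin 4).castSucc.castSucc.castSucc.castSucc.castSucc))
        (.and (itrF ((Fin.last 5).castSucc.castSucc.castSucc)
            ((Fin.last 6).castSucc.castSucc)
            ((1 : Fin 4).castSucc.castSucc.castSucc.castSucc.castSucc)
            ((2 : Fin 4).castSucc.castSucc.castSucc.castSucc.castSucc))
          (.and (orF (.mem ((Fin.last 4).castSucc.castSucc.castSucc.castSucc)
                ((Fin.last 5).castSucc.castSucc.castSucc))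
              (.eq ((Fin.last 4).castSucc.castSucc.castSucc.castSucc)
                ((Fin.last 5).castSucc.castSucc.castSucc)))
            (.and (fvalF ((3 : Fin 4).castSucc.castSucc.castSucc.castSucc.castSucc)
                ((Fin.last 4).castSucc.castSucc.castSucc.castSucc)
                ((Fin.last 7).castSucc))
              (fvalF ((Fin.last 6).castSucc.castSucc)
                ((Fin.last 4).castSucc.castSucc.castSucc.castSucc)
                (Fin.last 8))))))
      (.eq ((Fin.last 7).castSucc) (Fin.last 8))))))
  have hread : ∀ j0, EvalIn mem stP TrueC φ (Fin.snoc val j0) ↔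
      (∀ k2 g2 a2 b2, mem k2 w → ItrSem mem stP e u0 k2 g2 → (mem j0 k2 ∨ j0 = k2) →
        FValIn mem TrueC f j0 a2 → FValIn mem TrueC g2 j0 b2 → a2 = b2) := by
    intro j0
    simp only [φ, val, eval_allF, eval_impF, eval_andF, eval_orF, eval_mem, eval_eq,
      eval_itrF, eval_fvalF, Fin.snoc_castSucc, Fin.snoc_last,
      Matrix.cons_val_zero, Matrix.cons_val_one, Matrix.head_cons]
    constructor
    · intro H k2 g2 a2 b2 h1 h2 h3 h4 h5
      exact H k2 g2 a2 b2 ⟨h1, by simpa using h2, h3, h4, h5⟩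
    · intro H k2 g2 a2 b2 ⟨h1, h2, h3, h4, h5⟩
      exact H k2 g2 a2 b2 h1 (by simpa using h2) h3 h4 h5
  have key : ∀ j0, (mem j0 k ∨ j0 = k) → EvalIn mem stP TrueC φ (Fin.snoc val j0) := by
    refine nat_ind hH φ val k hkN ?_ ?_
    · -- base : j0 empty
      intro j0 hj0 hj0emp
      rw [hread]
      intro k2 g2 a2 b2 hk2w hg2 hjk2 ha2 hb2
      have hj0e : j0 = e := hH.ext j0 e (fun z => by
        constructor
        · intro hz; exact absurd hz (hj0emp z)
        · intro hz; exact absurd hz (he z))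
      subst hj0e
      have h1 : a2 = u0 := hf.2.2.2.1 j0 a2 u0 ha2 hf.1
      have h2 : b2 = u0 := hg2.2.2.2.1 j0 b2 u0 hb2 hg2.1
      rw [h1, h2]
    · -- step
      intro j0 z hj0 hsucc hzj0 hz IH
      rw [hread] at IH ⊢
      intro k2 g2 a2 b2 hk2w hg2 hjk2 ha2 hb2
      have hk2N : NatIn mem TrueC k2 := (hw k2).1 hk2w
      -- z ∈ k strictly
      have hzk : mem z k := by
        rcases hz with hzk | rfl
        · exact hzk
        · exfalso
          rcases hj0 with hj0k | rfl
          · exact nat_irrefl hkN (hkN.1.1 j0 trivial hj0k z trivial hzj0)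
          · exact nat_irrefl hkN hzj0
      have hzk2 : mem z k2 := by
        rcases hjk2 with h | rfl
        · exact hk2N.1.1 j0 trivial h z trivial hzj0
        · exact hzj0
      obtain ⟨az, haz⟩ := hf.2.2.1 z (Or.inl hzk)
      obtain ⟨bz, hbz⟩ := hg2.2.2.1 z (Or.inl hzk2)
      have hazbz : az = bz := IH k2 g2 az bz hk2w hg2 (Or.inl hzk2) haz hbz
      have hstep1 : StepSem mem stP az a2 := hf.2.1 z hzk j0 hsucc az haz a2 ha2
      have hstep2 : StepSem mem stP bz b2 := hg2.2.1 z hzk2 j0 hsucc bz hbz b2 hb2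
      exact step_det hH (hazbz ▸ hstep1) hstep2
  exact (hread j).1 (key j hjk) k' g a b hk'w hg hjk' ha hb

/-- For every standard `x0` there is a set of standard sets containing `x0`
and closed under standard membership. -/
lemma sigmaClosed {x0 : M} (hx0 : stP x0) :
    ∃ U, mem x0 U ∧ (∀ y, mem y U → stP y) ∧
      (∀ y, mem y U → ∀ z, stP z → mem z y → mem z U) := by
  obtain ⟨e, he⟩ := empty_exists hH
  obtain ⟨w, hw⟩ := omegaH_exists hH
  obtain ⟨s1, hs1⟩ := sing_exists hH x0
  obtain ⟨u0, hu0⟩ := sigma_exists hH s1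
  let val : Fin 3 → M := ![w, e, u0]
  let ψ : StFormula 5 :=
    .and (.mem ((Fin.last 3).castSucc)
        ((0 : Fin 3).castSucc.castSucc))
      (exF (.and (itrF ((Fin.last 3).castSucc.castSucc) (Fin.last 5)
          ((1 : Fin 3).castSucc.castSucc.castSucc)
          ((2 : Fin 3).castSucc.castSucc.castSucc))
        (fvalF (Fin.last 5) ((Fin.last 3).castSucc.castSucc) ((Fin.last 4).castSucc))))
  have hread : ∀ a b, EvalIn mem stP TrueC ψ (Fin.snoc (Fin.snoc val a) b) ↔
      (mem a w ∧ ∃ f, ItrSem mem stP e u0 a f ∧ FValIn mem TrueC f a b) := by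
    intro a b
    simp only [ψ, val, eval_andF, eval_exF, eval_mem, eval_itrF, eval_fvalF,
      Fin.snoc_castSucc, Fin.snoc_last, Matrix.cons_val_zero, Matrix.cons_val_one,
      Matrix.head_cons, show (![w, e, u0] : Fin 3 → M) 2 = u0 from rfl]
  obtain ⟨B, hB⟩ := hH.replacement ψ val w (by
    intro a b b' h1 h2
    rw [hread] at h1 h2
    obtain ⟨haw, f1, hf1, hv1⟩ := h1
    obtain ⟨-, f2, hf2, hv2⟩ := h2
    exact itr_agree hH he hw a a f1 f2 a b b' haw haw hf1 hf2 (Or.inr rfl)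
      (Or.inr rfl) hv1 hv2)
  have hBiff : ∀ b, mem b B ↔ ∃ a, mem a w ∧ mem a w ∧
      ∃ f, ItrSem mem stP e u0 a f ∧ FValIn mem TrueC f a b := by
    intro b
    rw [hB b]
    constructor
    · rintro ⟨a, haw, hψ⟩; rw [hread] at hψ; exact ⟨a, haw, hψ⟩
    · rintro ⟨a, haw, hψ⟩; exact ⟨a, haw, (hread a b).2 hψ⟩
  obtain ⟨U, hU⟩ := bigUnion_exists hH B
  have hmemB : ∀ b a f, mem a w → ItrSem mem stP e u0 a f → FValIn mem TrueC f a b →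
      mem b B := fun b a f h1 h2 h3 => (hBiff b).2 ⟨a, h1, h1, f, h2, h3⟩
  have hstdval : ∀ b a f, mem a w → ItrSem mem stP e u0 a f →
      FValIn mem TrueC f a b → ∀ y, mem y b → stP y := by
    intro b a f haw hf hfab y hyb
    have haN : NatIn mem TrueC a := (hw a).1 haw
    rcases haN.2 a trivial (Or.inl rfl) with hemp | ⟨z, -, hsucc⟩
    · -- a is empty, so a = e and b = u0
      have hae : a = e := hH.ext a e (fun t =>
        ⟨fun ht => absurd ht (hemp t trivial), fun ht => absurd ht (he t)⟩)
      subst hae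
      have : b = u0 := hf.2.2.2.1 a b u0 hfab hf.1
      subst this
      exact ((hu0 y).1 hyb).2
    · -- a is a successor, so b arises by a step
      have hza : mem z a := (hsucc z trivial).2 (Or.inr rfl)
      obtain ⟨c, hc⟩ := hf.2.2.1 z (Or.inl hza)
      have hstep : StepSem mem stP c b := hf.2.1 z hza a hsucc c hc b hfab
      exact ((hstep y).1 hyb).1
  refine ⟨U, ?_, ?_, ?_⟩
  · -- x0 ∈ U
    obtain ⟨f0, hf0⟩ := itr_base hH (u0 := u0) he
    have hew : mem e w := (hw e).2 (nat_zero hH he)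
    have hu0B : mem u0 B := hmemB u0 e f0 hew hf0 hf0.1
    exact (hU x0).2 ⟨u0, hu0B, (hu0 x0).2 ⟨(hs1 x0).2 rfl, hx0⟩⟩
  · -- all elements standard
    intro y hyU
    obtain ⟨b, hbB, hyb⟩ := (hU y).1 hyU
    obtain ⟨a, haw, -, f, hf, hfab⟩ := (hBiff b).1 hbB
    exact hstdval b a f haw hf hfab y hyb
  · -- closed under standard membership
    intro y hyU z hzst hzy
    obtain ⟨b, hbB, hyb⟩ := (hU y).1 hyU
    obtain ⟨a, haw, -, f, hf, hfab⟩ := (hBiff b).1 hbB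
    have haN : NatIn mem TrueC a := (hw a).1 haw
    obtain ⟨a', hsucc'⟩ := succ_exists hH a
    have ha'N : NatIn mem TrueC a' := nat_succ hH haN hsucc'
    have ha'w : mem a' w := (hw a').2 ha'N
    obtain ⟨u', hu'⟩ := step_exists hH b
    obtain ⟨f', hf', hval'⟩ := itr_succ hH hf haN hsucc' hfab hu'
    have hu'B : mem u' B := hmemB u' a' f' ha'w hf' hval'
    exact (hU z).2 ⟨u', hu'B, (hu' z).2 ⟨hzst, Or.inr ⟨y, hyb, hzy⟩⟩⟩

/-- A set containing all arguments and values of a set-coded function. -/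
lemma dUnion_exists (f : M) :
    ∃ c, ∀ z u, FValIn mem TrueC f z u → mem z c ∧ mem u c := by
  obtain ⟨c1, hc1⟩ := hH.union f
  obtain ⟨c2, hc2⟩ := hH.union c1
  refine ⟨c2, ?_⟩
  rintro z u ⟨p, -, hpf, s, t, -, -, hs, ht, hp⟩
  have hsp : mem s p := (hp s trivial).2 (Or.inl rfl)
  have htp : mem t p := (hp t trivial).2 (Or.inr rfl)
  have hzs : mem z s := (hs z trivial).2 rfl
  have hut : mem u t := (ht u trivial).2 (Or.inr rfl)
  constructor
  · exact (hc2 z).2 ⟨s, (hc1 s).2 ⟨p, hpf, hsp⟩, hzs⟩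
  · exact (hc2 u).2 ⟨t, (hc1 t).2 ⟨p, hpf, htp⟩, hut⟩

lemma fval_dom_st {F z u : M} (hF : ApproxSem mem stP F)
    (h : FValIn mem TrueC F z u) : stP z := by
  obtain ⟨p, -, hpF, hop⟩ := h
  obtain ⟨z2, a2, ho2, hst2⟩ := hF.1 p hpF
  rcases opair_inj hH hop ho2 with ⟨rfl, -⟩
  exact hst2

/-- Coherence: any two condensation approximations agree wherever both are
defined. -/
lemma approx_agree {F G : M} (hF : ApproxSem mem stP F) (hG : ApproxSem mem stP G) :
    ∀ z a b, FValIn mem TrueC F z a → FValIn mem TrueC G z b → a = b := by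
  intro z a b ha hb
  by_contra hne
  obtain ⟨c, hc⟩ := dUnion_exists hH F
  let φ : StFormula 3 :=
    exF (exF (.and (fvalF ((0 : Fin 2).castSucc.castSucc.castSucc)
        ((Fin.last 2).castSucc.castSucc) ((Fin.last 3).castSucc))
      (.and (fvalF ((1 : Fin 2).castSucc.castSucc.castSucc)
          ((Fin.last 2).castSucc.castSucc) (Fin.last 4))
        (.not (.eq ((Fin.last 3).castSucc) (Fin.last 4))))))
  obtain ⟨D, hD⟩ := hH.separation φ ![F, G] c
  have hDiff : ∀ t, mem t D ↔ mem t c ∧ ∃ u v, FValIn mem TrueC F t u ∧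
      FValIn mem TrueC G t v ∧ u ≠ v := by
    intro t
    rw [hD t]
    simp only [φ, eval_exF, eval_andF, eval_notF, eval_eq, eval_fvalF,
      Fin.snoc_castSucc, Fin.snoc_last, Matrix.cons_val_zero, Matrix.cons_val_one,
      Matrix.head_cons]
  have hDst : ∀ t, mem t D → stP t := by
    intro t ht
    obtain ⟨-, u, -, hu, -⟩ := (hDiff t).1 ht
    exact fval_dom_st hH hF hu
  have hzD : mem z D := (hDiff z).2 ⟨(hc z a ha).1, a, b, ha, hb, hne⟩
  obtain ⟨z1, hz1D, hmin⟩ := stdMin hH D hDst ⟨z, hzD⟩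
  obtain ⟨-, u1, v1, hu1, hv1, hne1⟩ := (hDiff z1).1 hz1D
  apply hne1
  apply hH.ext
  intro t
  constructor
  · intro htu
    obtain ⟨z', hst', hz'z1, hFz't⟩ := (hF.2.2.2 z1 u1 hu1 t).1 htu
    obtain ⟨b', hGz'b'⟩ := hG.2.2.1 z1 v1 hv1 z' hst' hz'z1
    have htb' : t = b' := by
      by_contra hne2
      exact hmin z' hz'z1 ((hDiff z').2 ⟨(hc z' t hFz't).1, t, b', hFz't, hGz'b', hne2⟩)
    rw [htb'] at hFz't ⊢
    exact (hG.2.2.2 z1 v1 hv1 b').2 ⟨z', hst', hz'z1, hGz'b'⟩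
  · intro htv
    obtain ⟨z', hst', hz'z1, hGz't⟩ := (hG.2.2.2 z1 v1 hv1 t).1 htv
    obtain ⟨b', hFz'b'⟩ := hF.2.2.1 z1 u1 hu1 z' hst' hz'z1
    have htb' : b' = t := by
      by_contra hne2
      exact hmin z' hz'z1 ((hDiff z').2 ⟨(hc z' b' hFz'b').1, b', t, hFz'b', hGz't, hne2⟩)
    rw [← htb']
    exact (hF.2.2.2 z1 u1 hu1 b').2 ⟨z', hst', hz'z1, hFz'b'⟩

/-- Existence: every standard set is in the domain of some condensation
approximation. -/
lemma approx_exists {x : M} (hx : stP x) :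
    ∃ F, ApproxSem mem stP F ∧ ∃ u, FValIn mem TrueC F x u := by
  obtain ⟨U, hxU, hUst, hUcl⟩ := sigmaClosed hH hx
  let φgood : StFormula 1 :=
    exF (.and (approxF (Fin.last 1))
      (exF (fvalF ((Fin.last 1).castSucc) ((Fin.last 0).castSucc.castSucc) (Fin.last 2))))
  have hgread : ∀ t (val0 : Fin 0 → M), EvalIn mem stP TrueC φgood (Fin.snoc val0 t) ↔
      ∃ F, ApproxSem mem stP F ∧ ∃ u, FValIn mem TrueC F t u := by
    intro t val0
    simp only [φgood, eval_exF, eval_andF, eval_approxF, eval_fvalF,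
      Fin.snoc_castSucc, Fin.snoc_last]
  obtain ⟨D2, hD2⟩ := hH.separation (.not φgood) Fin.elim0 U
  have hD2iff : ∀ t, mem t D2 ↔ mem t U ∧
      ¬ ∃ F, ApproxSem mem stP F ∧ ∃ u, FValIn mem TrueC F t u := by
    intro t
    rw [hD2 t]
    rw [show EvalIn mem stP TrueC (StFormula.not φgood) (Fin.snoc Fin.elim0 t) ↔
      ¬ EvalIn mem stP TrueC φgood (Fin.snoc Fin.elim0 t) from Iff.rfl, hgread]
  by_contra hbad
  have hxD2 : mem x D2 := (hD2iff x).2 ⟨hxU, hbad⟩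
  obtain ⟨z1, hz1D2, hmin⟩ := stdMin hH D2 (fun t ht => hUst t ((hD2iff t).1 ht).1)
    ⟨x, hxD2⟩
  obtain ⟨hz1U, hz1bad⟩ := (hD2iff z1).1 hz1D2
  have hz1st : stP z1 := hUst z1 hz1U
  obtain ⟨σz1, hσz1⟩ := sigma_exists hH z1
  -- collect approximations for the standard elements of z1
  let φc : StFormula 2 :=
    .and (approxF (Fin.last 1))
      (exF (fvalF ((Fin.last 1).castSucc) ((Fin.last 0).castSucc.castSucc) (Fin.last 2)))
  have hcread : ∀ a b, EvalIn mem stP TrueC φc (Fin.snoc (Fin.snoc Fin.elim0 a) b) ↔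
      (ApproxSem mem stP b ∧ ∃ u, FValIn mem TrueC b a u) := by
    intro a b
    simp only [φc, eval_exF, eval_andF, eval_approxF, eval_fvalF,
      Fin.snoc_castSucc, Fin.snoc_last]
  obtain ⟨B, hB⟩ := hH.collection φc Fin.elim0 σz1
  obtain ⟨B', hB'⟩ := hH.separation (approxF (Fin.last 0)) Fin.elim0 B
  have hB'iff : ∀ G, mem G B' ↔ mem G B ∧ ApproxSem mem stP G := by
    intro G
    rw [hB' G]
    rw [show EvalIn mem stP TrueC (approxF (Fin.last 0)) (Fin.snoc Fin.elim0 G) ↔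
      ApproxSem mem stP ((Fin.snoc Fin.elim0 G : Fin 1 → M) (Fin.last 0)) from
        eval_approxF _ _, Fin.snoc_last]
  obtain ⟨W, hW⟩ := bigUnion_exists hH B'
  have hWFV : ∀ z a, FValIn mem TrueC W z a ↔
      ∃ G, mem G B' ∧ FValIn mem TrueC G z a := by
    intro z a
    constructor
    · rintro ⟨p, -, hpW, hop⟩
      obtain ⟨G, hGB', hpG⟩ := (hW p).1 hpW
      exact ⟨G, hGB', p, trivial, hpG, hop⟩
    · rintro ⟨G, hGB', p, -, hpG, hop⟩
      exact ⟨p, trivial, (hW p).2 ⟨G, hGB', hpG⟩, hop⟩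
  have hWapprox : ApproxSem mem stP W := by
    refine ⟨?_, ?_, ?_, ?_⟩
    · intro p hpW
      obtain ⟨G, hGB', hpG⟩ := (hW p).1 hpW
      exact ((hB'iff G).1 hGB').2.1 p hpG
    · intro z a b ha hb
      obtain ⟨G, hGB', haG⟩ := (hWFV z a).1 ha
      obtain ⟨G', hG'B', hbG'⟩ := (hWFV z b).1 hb
      exact approx_agree hH ((hB'iff G).1 hGB').2 ((hB'iff G').1 hG'B').2 z a b haG hbG'
    · intro z a ha z' hst' hz'
      obtain ⟨G, hGB', haG⟩ := (hWFV z a).1 ha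
      obtain ⟨b, hb⟩ := ((hB'iff G).1 hGB').2.2.2.1 z a haG z' hst' hz'
      exact ⟨b, (hWFV z' b).2 ⟨G, hGB', hb⟩⟩
    · intro z a ha t
      obtain ⟨G, hGB', haG⟩ := (hWFV z a).1 ha
      have hGap := ((hB'iff G).1 hGB').2
      rw [hGap.2.2.2 z a haG t]
      constructor
      · rintro ⟨z', hst', hz', hG⟩
        exact ⟨z', hst', hz', (hWFV z' t).2 ⟨G, hGB', hG⟩⟩
      · rintro ⟨z', hst', hz', hWv⟩
        obtain ⟨b', hb'⟩ := hGap.2.2.1 z a haG z' hst' hz'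
        have : t = b' := by
          obtain ⟨G', hG'B', hG'⟩ := (hWFV z' t).1 hWv
          exact approx_agree hH ((hB'iff G').1 hG'B').2 hGap z' t b' hG' hb'
        exact ⟨z', hst', hz', this ▸ hb'⟩
  have hdomW : ∀ z', stP z' → mem z' z1 → ∃ u, FValIn mem TrueC W z' u := by
    intro z' hst' hz'
    have hz'U : mem z' U := hUcl z1 hz1U z' hst' hz'
    have hz'good : ∃ F, ApproxSem mem stP F ∧ ∃ u, FValIn mem TrueC F z' u := by
      by_contra hz'bad
      exact hmin z' hz' ((hD2iff z').2 ⟨hz'U, hz'bad⟩)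
    obtain ⟨F, hFap, u, hu⟩ := hz'good
    obtain ⟨G, hGB, hGeval⟩ := hB z' ((hσz1 z').2 ⟨hz', hst'⟩)
      ⟨F, (hcread z' F).2 ⟨hFap, u, hu⟩⟩
    rw [hcread] at hGeval
    obtain ⟨hGap, u', hu'⟩ := hGeval
    exact ⟨u', (hWFV z' u').2 ⟨G, (hB'iff G).2 ⟨hGB, hGap⟩, hu'⟩⟩
  have hnoz1 : ¬ ∃ u, FValIn mem TrueC W z1 u := by
    rintro ⟨u, hu⟩
    exact hz1bad ⟨W, hWapprox, u, hu⟩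
  -- build the value at z1 and extend W
  obtain ⟨c2, hc2⟩ := dUnion_exists hH W
  let φv : StFormula 3 :=
    exF (.and (.st (Fin.last 3))
      (.and (.mem (Fin.last 3) ((1 : Fin 2).castSucc.castSucc))
        (fvalF ((0 : Fin 2).castSucc.castSucc) (Fin.last 3)
          ((Fin.last 2).castSucc))))
  obtain ⟨v, hv⟩ := hH.separation φv ![W, z1] c2
  have hviff : ∀ t, mem t v ↔ ∃ z', stP z' ∧ mem z' z1 ∧ FValIn mem TrueC W z' t := by
    intro t
    rw [hv t]
    simp only [φv, eval_exF, eval_andF, eval_st, eval_mem, eval_fvalF,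
      Fin.snoc_castSucc, Fin.snoc_last, Matrix.cons_val_zero, Matrix.cons_val_one,
      Matrix.head_cons]
    constructor
    · rintro ⟨-, z', h1, h2, h3⟩
      exact ⟨z', h1, h2, h3⟩
    · rintro ⟨z', h1, h2, h3⟩
      exact ⟨(hc2 z' t h3).2, z', h1, h2, h3⟩
  obtain ⟨p1, hp1⟩ := opair_exists hH z1 v
  obtain ⟨F1, hF1⟩ := insert_exists hH W p1
  have hFV1 := fval_insert hH hp1 hF1
  have hF1approx : ApproxSem mem stP F1 := by
    refine ⟨?_, ?_, ?_, ?_⟩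
    · intro p hpF1
      rcases (hF1 p).1 hpF1 with hpW | rfl
      · exact hWapprox.1 p hpW
      · exact ⟨z1, v, hp1, hz1st⟩
    · intro z a b ha hb
      rcases (hFV1 z a).1 ha with haW | ⟨rfl, rfl⟩ <;>
        rcases (hFV1 z b).1 hb with hbW | hbe
      · exact hWapprox.2.1 z a b haW hbW
      · exact absurd (hbe.1 ▸ haW) (fun h => hnoz1 ⟨a, h⟩)
      · exact absurd hbW (fun h => hnoz1 ⟨b, h⟩)
      · rw [hbe.2]
    · intro z a ha z' hst' hz'
      rcases (hFV1 z a).1 ha with haW | ⟨rfl, rfl⟩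
      · obtain ⟨b, hb⟩ := hWapprox.2.2.1 z a haW z' hst' hz'
        exact ⟨b, (hFV1 z' b).2 (Or.inl hb)⟩
      · obtain ⟨b, hb⟩ := hdomW z' hst' hz'
        exact ⟨b, (hFV1 z' b).2 (Or.inl hb)⟩
    · intro z a ha t
      rcases (hFV1 z a).1 ha with haW | ⟨rfl, rfl⟩
      · rw [hWapprox.2.2.2 z a haW t]
        constructor
        · rintro ⟨z', h1, h2, h3⟩
          exact ⟨z', h1, h2, (hFV1 z' t).2 (Or.inl h3)⟩
        · rintro ⟨z', h1, h2, h3⟩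
          rcases (hFV1 z' t).1 h3 with h4 | ⟨rfl, rfl⟩
          · exact ⟨z', h1, h2, h4⟩
          · exfalso
            obtain ⟨b, hb⟩ := hWapprox.2.2.1 z a haW z' h1 h2
            exact hnoz1 ⟨b, hb⟩
      · rw [hviff t]
        constructor
        · rintro ⟨z', h1, h2, h3⟩
          exact ⟨z', h1, h2, (hFV1 z' t).2 (Or.inl h3)⟩
        · rintro ⟨z', h1, h2, h3⟩
          rcases (hFV1 z' t).1 h3 with h4 | ⟨rfl, rfl⟩
          · exact ⟨z', h1, h2, h4⟩
          · exact absurd h2 (st_irrefl hH hz1st)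
  exact hz1bad ⟨F1, hF1approx, v, (hFV1 z1 v).2 (Or.inr ⟨rfl, rfl⟩)⟩

end Toolkit2

/-! #### The condensation map -/

noncomputable def condMap (mem : M → M → Prop) (stP : M → Prop) : M → M := fun x =>
  letI := Classical.propDecidable (∃ u, ∃ F, ApproxSem mem stP F ∧ FValIn mem TrueC F x u)
  if hx : ∃ u, ∃ F, ApproxSem mem stP F ∧ FValIn mem TrueC F x u then hx.choose else x

/-- `s` is standard and its condensation value belongs to the parameter. -/
def phiMemV : StFormula 2 :=
  .and (.st (Fin.last 1))
    (exF (.and (approxF (Fin.last 2))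
      (exF (.and (fvalF ((Fin.last 2).castSucc) ((Fin.last 1).castSucc.castSucc)
          (Fin.last 3))
        (.mem (Fin.last 3) ((0 : Fin 1).castSucc.castSucc.castSucc))))))

/-- `y` is a condensation value of some standard set. -/
def phiV : StFormula 1 :=
  exF (.and (.st (Fin.last 1))
    (exF (.and (approxF (Fin.last 2))
      (fvalF (Fin.last 2) ((Fin.last 1).castSucc) ((Fin.last 0).castSucc.castSucc)))))

section CondMap
set_option linter.unusedSectionVars false
variable {mem : M → M → Prop} {stP : M → Prop} (hH : HSTModel mem stP)

lemma eval_phiMemV (Y s : M) :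
    EvalIn mem stP TrueC phiMemV (Fin.snoc ![Y] s) ↔
      (stP s ∧ ∃ F, ApproxSem mem stP F ∧ ∃ u, FValIn mem TrueC F s u ∧ mem u Y) := by
  simp only [phiMemV, eval_andF, eval_exF, eval_st, eval_mem, eval_approxF, eval_fvalF,
    Fin.snoc_castSucc, Fin.snoc_last, Matrix.cons_val_zero]

lemma eval_phiV (y : M) (val0 : Fin 0 → M) :
    EvalIn mem stP TrueC phiV (Fin.snoc val0 y) ↔
      ∃ s, stP s ∧ ∃ F, ApproxSem mem stP F ∧ FValIn mem TrueC F s y := by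
  simp only [phiV, eval_andF, eval_exF, eval_st, eval_approxF, eval_fvalF,
    Fin.snoc_castSucc, Fin.snoc_last]

include hH

lemma condMap_spec {x u F : M} (hF : ApproxSem mem stP F)
    (hu : FValIn mem TrueC F x u) : condMap mem stP x = u := by
  have hx : ∃ u, ∃ F, ApproxSem mem stP F ∧ FValIn mem TrueC F x u := ⟨u, F, hF, hu⟩
  unfold condMap
  rw [dif_pos hx]
  obtain ⟨F', hF', hu'⟩ := hx.choose_spec
  exact approx_agree hH hF' hF x _ u hu' hu

lemma condMap_val {x : M} (hx : stP x) :
    ∃ F, ApproxSem mem stP F ∧ FValIn mem TrueC F x (condMap mem stP x) := by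
  obtain ⟨F, hF, u, hu⟩ := approx_exists hH hx
  rw [condMap_spec hH hF hu]
  exact ⟨F, hF, hu⟩

lemma condenses : Condenses mem stP (condMap mem stP) := by
  intro x hx z
  obtain ⟨F, hF, hval⟩ := condMap_val hH hx
  rw [hF.2.2.2 x _ hval z]
  constructor
  · rintro ⟨y, hy1, hy2, hy3⟩
    exact ⟨y, hy1, hy2, (condMap_spec hH hF hy3).symm⟩
  · rintro ⟨y, hy1, hy2, rfl⟩
    obtain ⟨b, hb⟩ := hF.2.2.1 x _ hval y hy1 hy2
    have hyb : condMap mem stP y = b := condMap_spec hH hF hb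
    exact ⟨y, hy1, hy2, hyb ▸ hb⟩

lemma condV_iff {z : M} : CondV stP (condMap mem stP) z ↔
    ∃ s, stP s ∧ ∃ F, ApproxSem mem stP F ∧ FValIn mem TrueC F s z := by
  constructor
  · rintro ⟨x, hx, rfl⟩
    obtain ⟨F, hF, hval⟩ := condMap_val hH hx
    exact ⟨x, hx, F, hF, hval⟩
  · rintro ⟨s, hs, F, hF, hval⟩
    exact ⟨s, hs, (condMap_spec hH hF hval).symm⟩

lemma condV_mem {z u : M} (hz : CondV stP (condMap mem stP) z) (hu : mem u z) :
    CondV stP (condMap mem stP) u := by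
  obtain ⟨x, hx, rfl⟩ := hz
  obtain ⟨y, hy1, -, hy3⟩ := (condenses hH x hx u).1 hu
  exact ⟨y, hy1, hy3⟩

/-- Every set of the condensed universe is well-founded with respect to all
subsets of the model. -/
lemma condV_wf {z : M} (hz : CondV stP (condMap mem stP) z) : WFIn mem TrueC z := by
  obtain ⟨x, hxst, rfl⟩ := hz
  rintro Y - hsub ⟨w0, -, hw0⟩
  obtain ⟨U, hxU, hUst, hUcl⟩ := sigmaClosed hH hxst
  obtain ⟨Y', hY'⟩ := hH.separation phiMemV ![Y] U
  have hY'iff : ∀ s, mem s Y' ↔ mem s U ∧ stP s ∧ ∃ F, ApproxSem mem stP F ∧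
      ∃ u, FValIn mem TrueC F s u ∧ mem u Y := by
    intro s
    rw [hY' s, eval_phiMemV]
  have hY'in : ∀ s, mem s U → mem (condMap mem stP s) Y → mem s Y' := by
    intro s hsU hsY
    obtain ⟨F, hF, hval⟩ := condMap_val hH (hUst s hsU)
    exact (hY'iff s).2 ⟨hsU, hUst s hsU, F, hF, _, hval, hsY⟩
  have hY'out : ∀ s, mem s Y' → mem (condMap mem stP s) Y := by
    intro s hs
    obtain ⟨-, -, F, hF, u, hval, huY⟩ := (hY'iff s).1 hs
    rw [condMap_spec hH hF hval]
    exact huY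
  -- Y' is nonempty
  obtain ⟨s0, hs0st, hs0x, hs0val⟩ := (condenses hH x hxst w0).1 (hsub w0 trivial hw0)
  have hs0U : mem s0 U := hUcl x hxU s0 hs0st hs0x
  have hY'ne : ∃ s, mem s Y' := ⟨s0, hY'in s0 hs0U (hs0val ▸ hw0)⟩
  obtain ⟨s1, hs1Y', hs1min⟩ := stdMin hH Y'
    (fun s hs => ((hY'iff s).1 hs).2.1) hY'ne
  have hs1U : mem s1 U := ((hY'iff s1).1 hs1Y').1
  refine ⟨condMap mem stP s1, trivial, hY'out s1 hs1Y', ?_⟩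
  intro t _ ht htY
  obtain ⟨s', hs'st, hs's1, hs'val⟩ := (condenses hH s1 (hUst s1 hs1U) t).1 ht
  have hs'U : mem s' U := hUcl s1 hs1U s' hs'st hs's1
  exact hs1min s' hs's1 (hY'in s' hs'U (hs'val ▸ htY))

/-- Any set all of whose elements lie in the condensed universe belongs to
the condensed universe. -/
lemma condV_of_members {y : M}
    (hall : ∀ u, mem u y → CondV stP (condMap mem stP) u) :
    CondV stP (condMap mem stP) y := by
  -- collect standard preimages of the elements of y
  let φc : StFormula 2 :=
    .and (.st (Fin.last 1))
      (exF (.and (approxF (Fin.last 2))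
        (fvalF (Fin.last 2) ((Fin.last 1).castSucc) ((Fin.last 0).castSucc.castSucc))))
  have hcread : ∀ u s, EvalIn mem stP TrueC φc (Fin.snoc (Fin.snoc Fin.elim0 u) s) ↔
      (stP s ∧ ∃ F, ApproxSem mem stP F ∧ FValIn mem TrueC F s u) := by
    intro u s
    simp only [φc, eval_andF, eval_exF, eval_st, eval_approxF, eval_fvalF,
      Fin.snoc_castSucc, Fin.snoc_last]
  obtain ⟨B, hB⟩ := hH.collection φc Fin.elim0 y
  obtain ⟨D, hD⟩ := hH.separation phiMemV ![y] B
  have hDiff : ∀ s, mem s D ↔ mem s B ∧ stP s ∧ ∃ F, ApproxSem mem stP F ∧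
      ∃ u, FValIn mem TrueC F s u ∧ mem u y := by
    intro s
    rw [hD s, eval_phiMemV]
  obtain ⟨X, hXst, hXiff⟩ := hH.standardization D
  refine ⟨X, hXst, ?_⟩
  apply hH.ext
  intro t
  rw [condenses hH X hXst t]
  constructor
  · intro hty
    obtain ⟨s, hsst, rfl⟩ := hall t hty
    obtain ⟨F, hF, hval⟩ := condMap_val hH hsst
    obtain ⟨s2, hs2B, hs2eval⟩ := hB (condMap mem stP s) hty
      ⟨s, (hcread _ s).2 ⟨hsst, F, hF, hval⟩⟩
    rw [hcread] at hs2eval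
    obtain ⟨hs2st, F2, hF2, hval2⟩ := hs2eval
    have hs2D : mem s2 D := (hDiff s2).2 ⟨hs2B, hs2st, F2, hF2, _, hval2, hty⟩
    refine ⟨s2, hs2st, (hXiff s2 hs2st).2 hs2D, ?_⟩
    rw [condMap_spec hH hF2 hval2]
  · rintro ⟨s, hsst, hsX, rfl⟩
    have hsD : mem s D := (hXiff s hsst).1 hsX
    obtain ⟨-, -, F, hF, u, hval, huy⟩ := (hDiff s).1 hsD
    rw [condMap_spec hH hF hval]
    exact huy

/-- Every ordinal of the model lies in the condensed universe. -/
lemma ord_in_condV {z : M} (hz : OrdIn mem TrueC z) :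
    CondV stP (condMap mem stP) z := by
  obtain ⟨D, hD⟩ := hH.separation (.not phiV) Fin.elim0 z
  have hDiff : ∀ t, mem t D ↔ mem t z ∧
      ¬ ∃ s, stP s ∧ ∃ F, ApproxSem mem stP F ∧ FValIn mem TrueC F s t := by
    intro t
    rw [hD t]
    rw [show EvalIn mem stP TrueC (StFormula.not phiV) (Fin.snoc Fin.elim0 t) ↔
      ¬ EvalIn mem stP TrueC phiV (Fin.snoc Fin.elim0 t) from Iff.rfl, eval_phiV]
  have hmemV : ∀ u, mem u z → CondV stP (condMap mem stP) u := by
    intro u huz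
    by_cases hne : ∃ t, mem t D
    · exfalso
      obtain ⟨y0, -, hy0D, hy0min⟩ := hz.2.2.2.2 D trivial
        (fun t _ ht => ((hDiff t).1 ht).1) ⟨hne.choose, trivial, hne.choose_spec⟩
      obtain ⟨hy0z, hy0bad⟩ := (hDiff y0).1 hy0D
      apply hy0bad
      rw [← condV_iff hH]
      apply condV_of_members hH
      intro u2 hu2
      have hu2z : mem u2 z := hz.1 y0 trivial hy0z u2 trivial hu2
      have hu2D : ¬ mem u2 D := hy0min u2 trivial hu2
      have : ∃ s, stP s ∧ ∃ F, ApproxSem mem stP F ∧ FValIn mem TrueC F s u2 := by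
        by_contra hbad2
        exact hu2D ((hDiff u2).2 ⟨hu2z, hbad2⟩)
      exact (condV_iff hH).2 this
    · push_neg at hne
      have : ∃ s, stP s ∧ ∃ F, ApproxSem mem stP F ∧ FValIn mem TrueC F s u := by
        by_contra hbad2
        exact hne u ((hDiff u).2 ⟨huz, hbad2⟩)
      exact (condV_iff hH).2 this
  exact condV_of_members hH hmemV

end CondMap

end Aux

/-- In any model of HST, the model and the condensed
subuniverse `V` contain the same ordinals: an element of `V` is an ordinal in
the sense of `V` iff it is an ordinal in the sense of the whole model, and
every ordinal of the model belongs to `V`. -/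
theorem same_ordinals_in_condensed_universe {M : Type u}
    (mem : M → M → Prop) (stP : M → Prop) (hH : HSTModel mem stP) :
    ∃ h : M → M, Condenses mem stP h ∧
      (∀ z, CondV stP h z → (OrdIn mem (CondV stP h) z ↔ OrdIn mem TrueC z)) ∧
      (∀ z, OrdIn mem TrueC z → CondV stP h z) := by
  refine ⟨Aux.condMap mem stP, Aux.condenses hH, ?_,
    fun z hz => Aux.ord_in_condV hH hz⟩
  intro z hzV
  have hmemV : ∀ u, mem u z → CondV stP (Aux.condMap mem stP) u :=
    fun u hu => Aux.condV_mem hH hzV hu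
  constructor
  · -- an ordinal of V is an ordinal of H
    rintro ⟨tr, tri, t3, irr, -⟩
    refine ⟨?_, ?_, ?_, ?_, Aux.condV_wf hH hzV⟩
    · intro y _ hy u _ hu
      exact tr y (hmemV y hy) hy u (Aux.condV_mem hH (hmemV y hy) hu) hu
    · intro y w _ _ hy hw
      exact tri y w (hmemV y hy) (hmemV w hw) hy hw
    · intro y w v _ _ _ hy hw hv hyw hwv
      exact t3 y w v (hmemV y hy) (hmemV w hw) (hmemV v hv) hy hw hv hyw hwv
    · intro y _ hy hyy
      exact irr y (hmemV y hy) hy hyy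
  · -- an ordinal of H is an ordinal of V
    rintro ⟨tr, tri, t3, irr, wf⟩
    refine ⟨?_, ?_, ?_, ?_, ?_⟩
    · intro y _ hy u _ hu
      exact tr y trivial hy u trivial hu
    · intro y w _ _ hy hw
      exact tri y w trivial trivial hy hw
    · intro y w v _ _ _ hy hw hv hyw hwv
      exact t3 y w v trivial trivial trivial hy hw hv hyw hwv
    · intro y _ hy hyy
      exact irr y trivial hy hyy
    · -- well-foundedness relativized to V
      rintro Y hYV hsub ⟨w0, -, hw0⟩
      have hsubH : SubIn mem TrueC Y z := fun t _ ht =>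
        hsub t (Aux.condV_mem hH hYV ht) ht
      obtain ⟨w1, -, hw1Y, hw1min⟩ := wf Y trivial hsubH ⟨w0, trivial, hw0⟩
      exact ⟨w1, Aux.condV_mem hH hYV hw1Y, hw1Y,
        fun u _ hu => hw1min u trivial hu⟩

end HSTF
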